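/- Let the setting be type A_N or type B_N, let (i_t,k_t), 1 ≤ t ≤ T, be a snake, and let (p_1,…,p_T) ∈ P̄_{(i_t,k_t)}. Suppose p_t can be lowered at (j,ℓ) ∈ W; then the tuple obtained by replacing p_t with p_t𝒜_{j,ℓ}⁻¹ fails to be non-overlapping if and only if there exists s with t < s ≤ T such that p_s has an upper corner at (j,ℓ+r_j) or a lower corner at (j,ℓ−r_j). Similarly, suppose p_t can be raised at (j,ℓ) ∈ W; then the tuple obtained by replacing p_t with p_t𝒜_{j,ℓ} fails to be non-overlapping if and only if there exists s with 1 ≤ s < t such that p_s has a lower corner at (j,ℓ−r_j) or an upper corner at (j,ℓ+r_j). -/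

import Mathlib

/-!
Lowering `p_t` at `(j, ℓ)` moves points down (to larger second coordinates) within one column, or
two when `j = N - 1` in type `B`. So the new tuple can only fail to be non-overlapping against a
later path `p_s`, at a point of `p_s` lying in a moved column between the old and the new
position. Heights in a fixed column have a fixed class modulo `2` in type `A`, and modulo `4` in
an even column in type `B`, so this point sits exactly at the new position; its neighbours on
`p_s` lie strictly below those of `p_t`, which makes it an upper corner at `(j, ℓ + r_j)`. In the
column `2N - 1` the heights are `M ± ε` with `M` odd, and the two points `(2N - 1, ℓ ∓ (1 + ε))`
share their predecessor. The snake condition is needed only for `j = N - 1`: a later path through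
`(2N - 1, ℓ + 1 - ε)` would have to be the next one and would carry a label contradicting the
snake position. Raising is the mirror image.
-/

namespace Paper

/-- The ambient setting: type `A N` (with `N ≥ 1`) or type `B N ε`
(with `N ≥ 2` and `0 < ε < 1/2`). -/
inductive Setting where
  | A (N : ℕ)
  | B (N : ℕ) (ε : ℝ)

namespace Setting

/-- The rank `N`. -/
def N : Setting → ℕ
  | A n => n
  | B n _ => n

/-- Validity of the parameters of the setting. -/
def valid : Setting → Prop
  | A n => 1 ≤ n
  | B n ε => 2 ≤ n ∧ 0 < ε ∧ ε < 1 / 2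

end Setting

/-- The numbers `r_i` : in type A all equal `1`; in type B, `r_N = 1` and `r_i = 2` for `i < N`. -/
def rr : Setting → ℕ → ℕ
  | .A _, _ => 1
  | .B n _, j => if j = n then 1 else 2

/-- The set `X` in type `A_N`. -/
def XA (n : ℕ) : Set (ℕ × ℤ) :=
  {ik | 1 ≤ ik.1 ∧ ik.1 ≤ n ∧ ((ik.1 : ℤ) - ik.2) % 2 = 1}

/-- The set `X` in type `B_N`. -/
def XB (n : ℕ) : Set (ℕ × ℤ) :=
  {ik | (ik.1 = n ∧ ik.2 % 2 = 1) ∨ (1 ≤ ik.1 ∧ ik.1 < n ∧ ik.2 % 2 = 0)}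

/-- The set `X ⊆ I × ℤ`. -/
def X : Setting → Set (ℕ × ℤ)
  | .A n => XA n
  | .B n _ => XB n

/-- The set `W = {(i,k) : (i, k - r_i) ∈ X}`. -/
def W (S : Setting) : Set (ℕ × ℤ) :=
  {ik | (ik.1, ik.2 - (rr S ik.1 : ℤ)) ∈ X S}

/-- The `r`-th point of a path (a finite list of points of the plane). -/
def pt (p : List (ℝ × ℝ)) (r : ℕ) : ℝ × ℝ := p.getD r (0, 0)

/-- The set of paths `𝒫_{i,k}` in type `A_N`. -/
def pathsA (n : ℕ) (i : ℕ) (k : ℤ) : Set (List (ℝ × ℝ)) :=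
  {p | p.length = n + 2 ∧
    (∀ r, r < n + 2 → (pt p r).1 = (r : ℝ)) ∧
    (pt p 0).2 = (i : ℝ) + (k : ℝ) ∧
    (pt p (n + 1)).2 = (n : ℝ) + 1 - (i : ℝ) + (k : ℝ) ∧
    (∀ r, r ≤ n → (pt p (r + 1)).2 - (pt p r).2 = 1 ∨ (pt p (r + 1)).2 - (pt p r).2 = -1)}

/-- The set of paths `𝒫_{N,ℓ}` in type `B_N`. -/
def pathsBspin (n : ℕ) (ε : ℝ) (l : ℤ) : Set (List (ℝ × ℝ)) :=
  {p | p.length = n + 1 ∧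
    (if l % 4 = 3 then ∀ r, r < n → (pt p r).1 = 2 * (r : ℝ)
     else ∀ r, r < n → (pt p r).1 = 4 * (n : ℝ) - 2 - 2 * (r : ℝ)) ∧
    (pt p n).1 = 2 * (n : ℝ) - 1 ∧
    (pt p 0).2 = (l : ℝ) + 2 * (n : ℝ) - 1 ∧
    (∀ r, r + 2 ≤ n → (pt p (r + 1)).2 - (pt p r).2 = 2 ∨ (pt p (r + 1)).2 - (pt p r).2 = -2) ∧
    ((pt p n).2 - (pt p (n - 1)).2 = 1 + ε ∨ (pt p n).2 - (pt p (n - 1)).2 = -(1 + ε))}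

/-- The set of paths `𝒫_{i,k}` in type `B_N`. -/
def pathsB (n : ℕ) (ε : ℝ) (i : ℕ) (k : ℤ) : Set (List (ℝ × ℝ)) :=
  if i = n then pathsBspin n ε k
  else {p | ∃ a b : List (ℝ × ℝ),
    a ∈ pathsBspin n ε (k - (2 * (n : ℤ) - 2 * (i : ℤ) - 1)) ∧
    b ∈ pathsBspin n ε (k + (2 * (n : ℤ) - 2 * (i : ℤ) - 1)) ∧
    p = a ++ b.reverse ∧
    (pt a n).1 = (pt b n).1 ∧ 0 < (pt a n).2 - (pt b n).2}

/-- The set of paths `𝒫_{i,k}`. -/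
def P : Setting → ℕ → ℤ → Set (List (ℝ × ℝ))
  | .A n => pathsA n
  | .B n ε => pathsB n ε

/-- The map `ι : X → ℤ × ℤ` of type `B_N`. -/
def iotaB (n : ℕ) (ik : ℕ × ℤ) : ℤ × ℤ :=
  if ik.1 = n then (2 * (n : ℤ) - 1, ik.2)
  else if (2 * (n : ℤ) + ik.2 - 2 * (ik.1 : ℤ)) % 4 = 2 then (2 * (ik.1 : ℤ), ik.2)
  else (4 * (n : ℤ) - 2 - 2 * (ik.1 : ℤ), ik.2)

/-- The corners of a path: `Cp S p true` is the set `C_{p,+}` of upper corners, and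
`Cp S p false` is the set `C_{p,-}` of lower corners. -/
def Cp (S : Setting) (p : List (ℝ × ℝ)) (up : Bool) : Set (ℕ × ℤ) :=
  match S with
  | .A n =>
    {jl | 1 ≤ jl.1 ∧ jl.1 ≤ n ∧
      pt p jl.1 = ((jl.1 : ℝ), (jl.2 : ℝ)) ∧
      (pt p (jl.1 - 1)).2 = (jl.2 : ℝ) + (if up then 1 else -1) ∧
      (pt p (jl.1 + 1)).2 = (jl.2 : ℝ) + (if up then 1 else -1)}
  | .B n ε =>
    {jl | jl ∈ XB n ∧
      ((∃ r : ℕ, 1 ≤ r ∧ r + 1 < p.length ∧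
          pt p r = (((iotaB n jl).1 : ℝ), ((iotaB n jl).2 : ℝ)) ∧
          (iotaB n jl).1 ≠ 0 ∧ (iotaB n jl).1 ≠ 2 * (n : ℤ) - 1 ∧
          (iotaB n jl).1 ≠ 4 * (n : ℤ) - 2 ∧
          (if up then (pt p r).2 < (pt p (r - 1)).2 ∧ (pt p r).2 < (pt p (r + 1)).2
           else (pt p (r - 1)).2 < (pt p r).2 ∧ (pt p (r + 1)).2 < (pt p r).2))
       ∨ (jl.1 = n ∧
          (if up then (2 * (n : ℝ) - 1, (jl.2 : ℝ) - ε) ∈ p ∧ (2 * (n : ℝ) - 1, (jl.2 : ℝ) + ε) ∉ p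
           else (2 * (n : ℝ) - 1, (jl.2 : ℝ) + ε) ∈ p ∧ (2 * (n : ℝ) - 1, (jl.2 : ℝ) - ε) ∉ p)))}

/-- `p'` is obtained from `p` by replacing the point `q` by the point `q'`. -/
def Replace1 (p p' : List (ℝ × ℝ)) (q q' : ℝ × ℝ) : Prop :=
  ∃ r : ℕ, r < p.length ∧ pt p r = q ∧ p'.length = p.length ∧ pt p' r = q' ∧
    ∀ s, s < p.length → s ≠ r → pt p' s = pt p s

/-- `p'` is obtained from `p` by replacing the point `q1` by `q1'` and the point `q2` by `q2'`. -/
def Replace2 (p p' : List (ℝ × ℝ)) (q1 q1' q2 q2' : ℝ × ℝ) : Prop :=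
  ∃ r s : ℕ, r < p.length ∧ s < p.length ∧ r ≠ s ∧ pt p r = q1 ∧ pt p s = q2 ∧
    p'.length = p.length ∧ pt p' r = q1' ∧ pt p' s = q2' ∧
    ∀ u, u < p.length → u ≠ r → u ≠ s → pt p' u = pt p u

/-- The path `p` can be lowered at `(j, l)`: `(j, l - r_j) ∈ C_{p,+}` and
`(j, l + r_j) ∉ C_{p,+}`. -/
def CanLower (S : Setting) (p : List (ℝ × ℝ)) (j : ℕ) (l : ℤ) : Prop :=
  (j, l - (rr S j : ℤ)) ∈ Cp S p true ∧ (j, l + (rr S j : ℤ)) ∉ Cp S p true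

/-- `p'` is the result of the lowering move at `(j,l)` applied to the path `p ∈ 𝒫_{i,k}`;
written `p' = p 𝒜_{j,l}⁻¹`. -/
def LoweredTo (S : Setting) (i : ℕ) (k : ℤ) (j : ℕ) (l : ℤ)
    (p p' : List (ℝ × ℝ)) : Prop :=
  p ∈ P S i k ∧ p' ∈ P S i k ∧ CanLower S p j l ∧
  (match S with
   | .A _ => Replace1 p p' ((j : ℝ), (l : ℝ) - 1) ((j : ℝ), (l : ℝ) + 1)
   | .B n ε =>
     if j = n then
       Replace1 p p' (2 * (n : ℝ) - 1, (l : ℝ) - 1 - ε) (2 * (n : ℝ) - 1, (l : ℝ) + 1 + ε)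
     else if j = n - 1 then
       Replace2 p p'
         (((iotaB n (j, l - 2)).1 : ℝ), (l : ℝ) - 2) (((iotaB n (j, l - 2)).1 : ℝ), (l : ℝ) + 2)
         (2 * (n : ℝ) - 1, (l : ℝ) - 1 + ε) (2 * (n : ℝ) - 1, (l : ℝ) + 1 - ε)
     else
       Replace1 p p'
         (((iotaB n (j, l - 2)).1 : ℝ), (l : ℝ) - 2) (((iotaB n (j, l - 2)).1 : ℝ), (l : ℝ) + 2))

/-- The path `p` can be raised at `(j,l)`: it is of the form `p' 𝒜_{j,l}⁻¹`. -/
def CanRaise (S : Setting) (i : ℕ) (k : ℤ) (p : List (ℝ × ℝ)) (j : ℕ) (l : ℤ) : Prop :=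
  ∃ p', LoweredTo S i k j l p' p

/-- The monomial group `ℳ`, realised as exponent functions: the free abelian group on the
symbols `Y_{i,k}`, `(i,k) ∈ X`, is identified with finitely supported functions `(ℕ × ℤ) → ℤ`,
written additively. -/
def Y (x : ℕ × ℤ) : (ℕ × ℤ) → ℤ := fun z => if z = x then 1 else 0

noncomputable def ind (s : Prop) : ℤ := @ite ℤ s (Classical.propDecidable s) 1 0

/-- The monomial `m(p)` of a path: `∏ Y_{j,l}` over upper corners times `∏ Y_{j,l}⁻¹`
over lower corners. -/
noncomputable def mon (S : Setting) (p : List (ℝ × ℝ)) : (ℕ × ℤ) → ℤ :=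
  fun x => ind (x ∈ Cp S p true) - ind (x ∈ Cp S p false)

/-- The monomials `A_{j,l}`, with the conventions `Y_{0,·} = Y_{N+1,·} = 1`. -/
def Amon (S : Setting) (j : ℕ) (l : ℤ) : (ℕ × ℤ) → ℤ :=
  match S with
  | .A n =>
      Y (j, l + 1) + Y (j, l - 1) - (if j = 1 then 0 else Y (j - 1, l))
        - (if j = n then 0 else Y (j + 1, l))
  | .B n _ =>
      if j = n then Y (n, l + 1) + Y (n, l - 1) - Y (n - 1, l)
      else if j = n - 1 then
        Y (n - 1, l + 2) + Y (n - 1, l - 2) - (if j = 1 then 0 else Y (n - 2, l))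
          - Y (n, l + 1) - Y (n, l - 1)
      else
        Y (j, l + 2) + Y (j, l - 2) - (if j = 1 then 0 else Y (j - 1, l)) - Y (j + 1, l)

/-- A monomial is dominant iff all its exponents are nonnegative. -/
def Dominant (m : (ℕ × ℤ) → ℤ) : Prop := ∀ x, 0 ≤ m x

/-- A monomial is anti-dominant iff all its exponents are nonpositive. -/
def AntiDominant (m : (ℕ × ℤ) → ℤ) : Prop := ∀ x, m x ≤ 0

/-- `(i',k')` is in snake position with respect to `(i,k)`. -/
def SnakePos : Setting → ℕ × ℤ → ℕ × ℤ → Prop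
  | .A _, ik, ik' => |(ik'.1 : ℤ) - (ik.1 : ℤ)| + 2 ≤ ik'.2 - ik.2
  | .B n _, ik, ik' =>
      if ik.1 = n ∧ ik'.1 = n then
        2 ≤ ik'.2 - ik.2 ∧ (ik'.2 - ik.2) % 4 = 2
      else if ik.1 = n ∨ ik'.1 = n then
        2 * |(ik'.1 : ℤ) - (ik.1 : ℤ)| + 3 ≤ ik'.2 - ik.2 ∧
          (ik'.2 - ik.2) % 4 = (2 * |(ik'.1 : ℤ) - (ik.1 : ℤ)| - 1) % 4
      else
        2 * |(ik'.1 : ℤ) - (ik.1 : ℤ)| + 4 ≤ ik'.2 - ik.2 ∧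
          (ik'.2 - ik.2) % 4 = (2 * |(ik'.1 : ℤ) - (ik.1 : ℤ)|) % 4

/-- A snake: a sequence of points of `X`, each in snake position w.r.t. the previous one. -/
def IsSnake (S : Setting) {T : ℕ} (w : Fin T → ℕ × ℤ) : Prop :=
  (∀ t, w t ∈ X S) ∧
  ∀ (t : Fin T) (h : (t : ℕ) + 1 < T), SnakePos S (w t) (w ⟨(t : ℕ) + 1, h⟩)

/-- `p` is strictly above `p'`. -/
def StrictlyAbove (p p' : List (ℝ × ℝ)) : Prop :=
  ∀ a ∈ p, ∀ b ∈ p', a.1 = b.1 → a.2 < b.2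

/-- A tuple of paths is non-overlapping. -/
def NonOverlapping {T : ℕ} (ps : Fin T → List (ℝ × ℝ)) : Prop :=
  ∀ s t : Fin T, s < t → StrictlyAbove (ps s) (ps t)

/-- The set `𝒫̄` of non-overlapping tuples of paths attached to a snake. -/
def PBar (S : Setting) {T : ℕ} (w : Fin T → ℕ × ℤ) : Set (Fin T → List (ℝ × ℝ)) :=
  {ps | (∀ t, ps t ∈ P S (w t).1 (w t).2) ∧ NonOverlapping ps}

/-- The product `∏_t m(p_t)` of the monomials of a tuple of paths. -/
noncomputable def tmon (S : Setting) {T : ℕ} (ps : Fin T → List (ℝ × ℝ)) : (ℕ × ℤ) → ℤ :=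
  ∑ t, mon S (ps t)

/-- Lowering move at `jl` on a tuple of paths: one component is lowered, the others
are unchanged. -/
def TLoweredTo (S : Setting) {T : ℕ} (w : Fin T → ℕ × ℤ) (jl : ℕ × ℤ)
    (ps ps' : Fin T → List (ℝ × ℝ)) : Prop :=
  ∃ t, LoweredTo S (w t).1 (w t).2 jl.1 jl.2 (ps t) (ps' t) ∧ ∀ s, s ≠ t → ps' s = ps s

/-- Sequences of raising/lowering moves on a single path; the list records, for each move,
whether it was a lowering move (`true`) or a raising move (`false`), and its site. -/
inductive MoveSeq (S : Setting) (i : ℕ) (k : ℤ) :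
    List (ℝ × ℝ) → List (ℝ × ℝ) → List (Bool × (ℕ × ℤ)) → Prop where
  | nil (p : List (ℝ × ℝ)) : MoveSeq S i k p p []
  | lower {p q r : List (ℝ × ℝ)} {jl : ℕ × ℤ} {ms : List (Bool × (ℕ × ℤ))} :
      jl ∈ W S → LoweredTo S i k jl.1 jl.2 p q → MoveSeq S i k q r ms →
      MoveSeq S i k p r ((true, jl) :: ms)
  | raise {p q r : List (ℝ × ℝ)} {jl : ℕ × ℤ} {ms : List (Bool × (ℕ × ℤ))} :
      jl ∈ W S → LoweredTo S i k jl.1 jl.2 q p → MoveSeq S i k q r ms →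
      MoveSeq S i k p r ((false, jl) :: ms)

/-- Sequences of raising/lowering moves on tuples of paths, all of whose intermediate
tuples are non-overlapping. -/
inductive TMoveSeq (S : Setting) {T : ℕ} (w : Fin T → ℕ × ℤ) :
    (Fin T → List (ℝ × ℝ)) → (Fin T → List (ℝ × ℝ)) → List (Bool × (ℕ × ℤ)) → Prop where
  | nil (ps : Fin T → List (ℝ × ℝ)) : TMoveSeq S w ps ps []
  | lower {ps qs rs : Fin T → List (ℝ × ℝ)} {jl : ℕ × ℤ} {ms : List (Bool × (ℕ × ℤ))} :
      jl ∈ W S → TLoweredTo S w jl ps qs → NonOverlapping qs →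
      TMoveSeq S w qs rs ms → TMoveSeq S w ps rs ((true, jl) :: ms)
  | raise {ps qs rs : Fin T → List (ℝ × ℝ)} {jl : ℕ × ℤ} {ms : List (Bool × (ℕ × ℤ))} :
      jl ∈ W S → TLoweredTo S w jl qs ps → NonOverlapping qs →
      TMoveSeq S w qs rs ms → TMoveSeq S w ps rs ((false, jl) :: ms)

/-- Sequences of lowering moves on tuples of paths, all of whose intermediate tuples
are non-overlapping; the list records the sites, in order. -/
inductive TLowerSeq (S : Setting) {T : ℕ} (w : Fin T → ℕ × ℤ) :
    (Fin T → List (ℝ × ℝ)) → (Fin T → List (ℝ × ℝ)) → List (ℕ × ℤ) → Prop where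
  | nil (ps : Fin T → List (ℝ × ℝ)) : TLowerSeq S w ps ps []
  | cons {ps qs rs : Fin T → List (ℝ × ℝ)} {jl : ℕ × ℤ} {ms : List (ℕ × ℤ)} :
      jl ∈ W S → TLoweredTo S w jl ps qs → NonOverlapping qs →
      TLowerSeq S w qs rs ms → TLowerSeq S w ps rs (jl :: ms)

/-- Weak order on paths with the same x-coordinates: `p` is weakly above `p'`. -/
def WeaklyAbove (p p' : List (ℝ × ℝ)) : Prop :=
  p.length = p'.length ∧ ∀ r, r < p.length → (pt p r).2 ≤ (pt p' r).2

/-- `p` is weakly below `p'`. -/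
def WeaklyBelow (p p' : List (ℝ × ℝ)) : Prop :=
  p.length = p'.length ∧ ∀ r, r < p.length → (pt p' r).2 ≤ (pt p r).2

/-- The path `top(p, p')`. -/
def topPath (p p' : List (ℝ × ℝ)) : List (ℝ × ℝ) :=
  List.zipWith (fun a b => (a.1, min a.2 b.2)) p p'

/-- The distinguished point contained in the highest path `p⁺_{i,k}`. -/
def highPoint : Setting → ℕ → ℤ → ℝ × ℝ
  | .A _, i, k => ((i : ℝ), (k : ℝ))
  | .B n ε, i, k =>
      if i = n then (2 * (n : ℝ) - 1, (k : ℝ) - ε)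
      else (((iotaB n (i, k)).1 : ℝ), ((iotaB n (i, k)).2 : ℝ))

/-- The distinguished point contained in the lowest path `p⁻_{i,k}`. -/
def lowPoint : Setting → ℕ → ℤ → ℝ × ℝ
  | .A n, i, k => ((n : ℝ) + 1 - (i : ℝ), (k : ℝ) + (n : ℝ) + 1)
  | .B n ε, i, k =>
      if i = n then (2 * (n : ℝ) - 1, (k : ℝ) + 4 * (n : ℝ) - 2 + ε)
      else (((iotaB n (i, k + 4 * (n : ℤ) - 2)).1 : ℝ),
            ((iotaB n (i, k + 4 * (n : ℤ) - 2)).2 : ℝ))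

/-- The highest path `p⁺_{i,k}` : the path of `𝒫_{i,k}` with no lower corners. -/
noncomputable def highestPath (S : Setting) (i : ℕ) (k : ℤ) : List (ℝ × ℝ) :=
  Classical.epsilon fun p => p ∈ P S i k ∧ Cp S p false = ∅

/-- The lowest path `p⁻_{i,k}` : the path of `𝒫_{i,k}` with no upper corners. -/
noncomputable def lowestPath (S : Setting) (i : ℕ) (k : ℤ) : List (ℝ × ℝ) :=
  Classical.epsilon fun p => p ∈ P S i k ∧ Cp S p true = ∅

lemma pt_mem {p : List (ℝ × ℝ)} {r : ℕ} (h : r < p.length) : pt p r ∈ p := by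
  rw [pt, List.getD_eq_getElem _ _ h]
  exact List.getElem_mem _

lemma mem_iff_exists_pt {p : List (ℝ × ℝ)} {a : ℝ × ℝ} :
    a ∈ p ↔ ∃ r, r < p.length ∧ pt p r = a := by
  rw [List.mem_iff_getElem]
  constructor
  · rintro ⟨r, h, rfl⟩
    exact ⟨r, h, List.getD_eq_getElem _ _ h⟩
  · rintro ⟨r, h, rfl⟩
    exact ⟨r, h, (List.getD_eq_getElem _ _ h).symm⟩

lemma Int.eq_of_sub_one_lt_of_le {d a : ℤ} (h₁ : (a : ℝ) - 1 < d) (h₂ : (d : ℝ) ≤ a) : d = a := by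
  have h₁ : a - 1 < d := by exact_mod_cast h₁
  have h₂ : d ≤ a := by exact_mod_cast h₂
  omega

lemma Int.eq_of_le_of_lt_add_one {d a : ℤ} (h₁ : (a : ℝ) ≤ d) (h₂ : (d : ℝ) < a + 1) : d = a := by
  have h₁ : a ≤ d := by exact_mod_cast h₁
  have h₂ : d < a + 1 := by exact_mod_cast h₂
  omega

lemma mem_of_fst_snd_eq {p : List (ℝ × ℝ)} {b : ℝ × ℝ} (hb : b ∈ p) {x y : ℝ} (hx : b.1 = x)
    (hy : b.2 = y) : (x, y) ∈ p := by
  rwa [← hx, ← hy]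

lemma pt_append_left {a c : List (ℝ × ℝ)} {r : ℕ} (h : r < a.length) :
    pt (a ++ c) r = pt a r :=
  List.getD_append _ _ _ _ h

lemma pt_append_right (a c : List (ℝ × ℝ)) (r : ℕ) : pt (a ++ c) (a.length + r) = pt c r := by
  rw [pt, List.getD_append_right _ _ _ _ (by omega), Nat.add_sub_cancel_left]
  rfl

lemma pt_reverse {c : List (ℝ × ℝ)} {r : ℕ} (h : r < c.length) :
    pt c.reverse r = pt c (c.length - 1 - r) := by
  rw [pt, pt, List.getD_reverse r h]

def HasNeighbours (p : List (ℝ × ℝ)) (v : ℝ × ℝ) (Q : ℝ × ℝ → Prop) : Prop :=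
  ∃ r, 1 ≤ r ∧ r + 1 < p.length ∧ pt p r = v ∧ Q (pt p (r - 1)) ∧ Q (pt p (r + 1))

namespace HasNeighbours

variable {a c : List (ℝ × ℝ)} {v : ℝ × ℝ} {Q : ℝ × ℝ → Prop}

lemma append_right (h : HasNeighbours a v Q) (c : List (ℝ × ℝ)) : HasNeighbours (a ++ c) v Q := by
  obtain ⟨r, hr1, hr2, hv, hQ1, hQ2⟩ := h
  refine ⟨r, hr1, by simp only [List.length_append]; omega, ?_, ?_, ?_⟩ <;>
    rwa [pt_append_left (by omega)]

lemma append_left (h : HasNeighbours c v Q) (a : List (ℝ × ℝ)) : HasNeighbours (a ++ c) v Q := by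
  obtain ⟨r, hr1, hr2, hv, hQ1, hQ2⟩ := h
  refine ⟨a.length + r, by omega, by simp only [List.length_append]; omega, ?_, ?_, ?_⟩
  · rwa [pt_append_right]
  · rwa [show a.length + r - 1 = a.length + (r - 1) by omega, pt_append_right]
  · rwa [show a.length + r + 1 = a.length + (r + 1) by omega, pt_append_right]

lemma reverse (h : HasNeighbours c v Q) : HasNeighbours c.reverse v Q := by
  obtain ⟨r, hr1, hr2, hv, hQ1, hQ2⟩ := h
  refine ⟨c.length - 1 - r, by omega, by simp only [List.length_reverse]; omega, ?_, ?_, ?_⟩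
  · rwa [pt_reverse (by omega), show c.length - 1 - (c.length - 1 - r) = r by omega]
  · rwa [pt_reverse (by omega), show c.length - 1 - (c.length - 1 - r - 1) = r + 1 by omega]
  · rwa [pt_reverse (by omega), show c.length - 1 - (c.length - 1 - r + 1) = r - 1 by omega]

end HasNeighbours

lemma Replace1.symm {p p' : List (ℝ × ℝ)} {q q' : ℝ × ℝ} (h : Replace1 p p' q q') :
    Replace1 p' p q' q := by
  obtain ⟨r, hr, hq, hlen, hq', hoth⟩ := h
  exact ⟨r, hlen ▸ hr, hq', hlen.symm, hq, fun s hs hsr => (hoth s (hlen ▸ hs) hsr).symm⟩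

lemma Replace2.symm {p p' : List (ℝ × ℝ)} {q₁ q₁' q₂ q₂' : ℝ × ℝ}
    (h : Replace2 p p' q₁ q₁' q₂ q₂') : Replace2 p' p q₁' q₁ q₂' q₂ := by
  obtain ⟨r, s, hr, hs, hrs, hq₁, hq₂, hlen, hq₁', hq₂', hoth⟩ := h
  exact ⟨r, s, hlen ▸ hr, hlen ▸ hs, hrs, hq₁', hq₂', hlen.symm, hq₁, hq₂,
    fun u hu hur hus => (hoth u (hlen ▸ hu) hur hus).symm⟩

lemma Replace1.mem {p p' : List (ℝ × ℝ)} {q q' : ℝ × ℝ} (h : Replace1 p p' q q') :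
    q ∈ p ∧ q' ∈ p' ∧ ∀ a ∈ p', a ∈ p ∨ a = q' := by
  obtain ⟨r, hr, hq, hlen, hq', hoth⟩ := h
  refine ⟨hq ▸ pt_mem hr, hq' ▸ pt_mem (hlen ▸ hr), fun a ha => ?_⟩
  obtain ⟨u, hu, rfl⟩ := mem_iff_exists_pt.1 ha
  rcases eq_or_ne u r with rfl | hne
  · exact Or.inr hq'
  · exact Or.inl (hoth u (hlen ▸ hu) hne ▸ pt_mem (hlen ▸ hu))

lemma Replace2.mem {p p' : List (ℝ × ℝ)} {q₁ q₁' q₂ q₂' : ℝ × ℝ}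
    (h : Replace2 p p' q₁ q₁' q₂ q₂') :
    q₁ ∈ p ∧ q₂ ∈ p ∧ q₁' ∈ p' ∧ q₂' ∈ p' ∧ ∀ a ∈ p', a ∈ p ∨ a = q₁' ∨ a = q₂' := by
  obtain ⟨r, s, hr, hs, hrs, hq₁, hq₂, hlen, hq₁', hq₂', hoth⟩ := h
  refine ⟨hq₁ ▸ pt_mem hr, hq₂ ▸ pt_mem hs, hq₁' ▸ pt_mem (hlen ▸ hr),
    hq₂' ▸ pt_mem (hlen ▸ hs), fun a ha => ?_⟩
  obtain ⟨u, hu, rfl⟩ := mem_iff_exists_pt.1 ha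
  rcases eq_or_ne u r with rfl | hne₁
  · exact Or.inr (Or.inl hq₁')
  rcases eq_or_ne u s with rfl | hne₂
  · exact Or.inr (Or.inr hq₂')
  · exact Or.inl (hoth u (hlen ▸ hu) hne₁ hne₂ ▸ pt_mem (hlen ▸ hu))

/-- Heights grow downwards: `StrictlyAbove p q` asks for smaller second coordinates on `p`. -/
def LiesBelow (p q : List (ℝ × ℝ)) : Prop := ∀ a ∈ p, ∃ b ∈ q, b.1 = a.1 ∧ b.2 ≤ a.2

def LiesAbove (p q : List (ℝ × ℝ)) : Prop := ∀ a ∈ p, ∃ b ∈ q, b.1 = a.1 ∧ a.2 ≤ b.2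

lemma LiesBelow.refl (p : List (ℝ × ℝ)) : LiesBelow p p := fun a ha => ⟨a, ha, rfl, le_rfl⟩

lemma LiesAbove.refl (p : List (ℝ × ℝ)) : LiesAbove p p := fun a ha => ⟨a, ha, rfl, le_rfl⟩

lemma Replace1.liesBelow_and_liesAbove {p p' : List (ℝ × ℝ)} {q q' : ℝ × ℝ}
    (h : Replace1 p p' q q') (h₁ : q.1 = q'.1) (h₂ : q.2 ≤ q'.2) :
    LiesBelow p' p ∧ LiesAbove p p' := by
  obtain ⟨hq, hq', hsub⟩ := h.mem
  obtain ⟨-, -, hsub'⟩ := h.symm.mem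
  refine ⟨fun a ha => ?_, fun a ha => ?_⟩
  · rcases hsub a ha with ha | rfl
    exacts [LiesBelow.refl p a ha, ⟨q, hq, h₁, h₂⟩]
  · rcases hsub' a ha with ha | rfl
    exacts [LiesAbove.refl p' a ha, ⟨q', hq', h₁.symm, h₂⟩]

lemma Replace2.liesBelow_and_liesAbove {p p' : List (ℝ × ℝ)} {q₁ q₁' q₂ q₂' : ℝ × ℝ}
    (h : Replace2 p p' q₁ q₁' q₂ q₂') (h₁ : q₁.1 = q₁'.1) (h₁' : q₁.2 ≤ q₁'.2)
    (h₂ : q₂.1 = q₂'.1) (h₂' : q₂.2 ≤ q₂'.2) : LiesBelow p' p ∧ LiesAbove p p' := by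
  obtain ⟨hq₁, hq₂, hq₁', hq₂', hsub⟩ := h.mem
  obtain ⟨-, -, -, -, hsub'⟩ := h.symm.mem
  refine ⟨fun a ha => ?_, fun a ha => ?_⟩
  · rcases hsub a ha with ha | rfl | rfl
    exacts [LiesBelow.refl p a ha, ⟨q₁, hq₁, h₁, h₁'⟩, ⟨q₂, hq₂, h₂, h₂'⟩]
  · rcases hsub' a ha with ha | rfl | rfl
    exacts [LiesAbove.refl p' a ha, ⟨q₁', hq₁', h₁.symm, h₁'⟩, ⟨q₂', hq₂', h₂.symm, h₂'⟩]

lemma not_strictlyAbove_iff {p q : List (ℝ × ℝ)} :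
    ¬ StrictlyAbove p q ↔ ∃ a ∈ p, ∃ b ∈ q, a.1 = b.1 ∧ b.2 ≤ a.2 := by
  simp only [StrictlyAbove, not_forall, not_lt, exists_prop]

lemma StrictlyAbove.not_mem {p q : List (ℝ × ℝ)} (h : StrictlyAbove p q) {a : ℝ × ℝ}
    (ha : a ∈ p) : a ∉ q :=
  fun hb => lt_irrefl _ (h a ha a hb rfl)

lemma StrictlyAbove.of_liesBelow {p p' q : List (ℝ × ℝ)} (h : StrictlyAbove q p)
    (hp' : LiesBelow p' p) : StrictlyAbove q p' := by
  intro a ha b hb hab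
  obtain ⟨b₀, hb₀, hx, hy⟩ := hp' b hb
  exact (h a ha b₀ hb₀ (hab.trans hx.symm)).trans_le hy

lemma StrictlyAbove.of_liesAbove {p p' q : List (ℝ × ℝ)} (h : StrictlyAbove p q)
    (hp' : LiesAbove p' p) : StrictlyAbove p' q := by
  intro a ha b hb hab
  obtain ⟨a₀, ha₀, hx, hy⟩ := hp' a ha
  exact hy.trans_lt (h a₀ ha₀ b hb (hx.trans hab))

lemma not_nonOverlapping_update_iff {T : ℕ} {ps : Fin T → List (ℝ × ℝ)}
    (hno : NonOverlapping ps) (t : Fin T) (p' : List (ℝ × ℝ)) :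
    ¬ NonOverlapping (Function.update ps t p') ↔
      (∃ s, t < s ∧ ¬ StrictlyAbove p' (ps s)) ∨ (∃ s, s < t ∧ ¬ StrictlyAbove (ps s) p') := by
  constructor
  · intro h
    by_contra! hc
    refine h fun u v huv => ?_
    rcases eq_or_ne u t with rfl | hu
    · rw [Function.update_self, Function.update_of_ne huv.ne']
      exact hc.1 v huv
    rcases eq_or_ne v t with rfl | hv
    · rw [Function.update_self, Function.update_of_ne hu]
      exact hc.2 u huv
    rw [Function.update_of_ne hu, Function.update_of_ne hv]
    exact hno u v huv
  · rintro (⟨s, hts, hs⟩ | ⟨s, hst, hs⟩) h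
    · have := h t s hts
      rw [Function.update_self, Function.update_of_ne hts.ne'] at this
      exact hs this
    · have := h s t hst
      rw [Function.update_self, Function.update_of_ne hst.ne] at this
      exact hs this

lemma not_nonOverlapping_update_iff_of_liesBelow {T : ℕ} {ps : Fin T → List (ℝ × ℝ)}
    (hno : NonOverlapping ps) {t : Fin T} {p' : List (ℝ × ℝ)} (hp' : LiesBelow p' (ps t))
    {C : Fin T → Prop} (hC : ∀ s, t < s → (¬ StrictlyAbove p' (ps s) ↔ C s)) :
    ¬ NonOverlapping (Function.update ps t p') ↔ ∃ s, t < s ∧ C s := by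
  rw [not_nonOverlapping_update_iff hno]
  constructor
  · rintro (⟨s, hts, hs⟩ | ⟨s, hst, hs⟩)
    · exact ⟨s, hts, (hC s hts).1 hs⟩
    · exact absurd ((hno s t hst).of_liesBelow hp') hs
  · rintro ⟨s, hts, hs⟩
    exact Or.inl ⟨s, hts, (hC s hts).2 hs⟩

lemma not_nonOverlapping_update_iff_of_liesAbove {T : ℕ} {ps : Fin T → List (ℝ × ℝ)}
    (hno : NonOverlapping ps) {t : Fin T} {p' : List (ℝ × ℝ)} (hp' : LiesAbove p' (ps t))
    {C : Fin T → Prop} (hC : ∀ s, s < t → (¬ StrictlyAbove (ps s) p' ↔ C s)) :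
    ¬ NonOverlapping (Function.update ps t p') ↔ ∃ s, s < t ∧ C s := by
  rw [not_nonOverlapping_update_iff hno]
  constructor
  · rintro (⟨s, hts, hs⟩ | ⟨s, hst, hs⟩)
    · exact absurd ((hno t s hts).of_liesAbove hp') hs
    · exact ⟨s, hst, (hC s hst).1 hs⟩
  · rintro ⟨s, hst, hs⟩
    exact Or.inr ⟨s, hst, (hC s hst).2 hs⟩

lemma LoweredTo.liesBelow_and_liesAbove {S : Setting} (hS : S.valid) {i : ℕ} {k : ℤ} {j : ℕ}
    {l : ℤ} {p p' : List (ℝ × ℝ)} (h : LoweredTo S i k j l p p') :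
    LiesBelow p' p ∧ LiesAbove p p' := by
  obtain ⟨-, -, -, hrep⟩ := h
  cases S with
  | A n => exact hrep.liesBelow_and_liesAbove rfl (by linarith)
  | B n ε =>
    obtain ⟨-, hε, hε'⟩ := hS
    dsimp only at hrep
    split_ifs at hrep
    · exact hrep.liesBelow_and_liesAbove rfl (by linarith)
    · exact hrep.liesBelow_and_liesAbove rfl (by linarith) rfl (by linarith)
    · exact hrep.liesBelow_and_liesAbove rfl (by linarith)

namespace TypeA

variable {n i i' j : ℕ} {k k' l : ℤ} {p p' q : List (ℝ × ℝ)}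

lemma pt_fst (hp : p ∈ pathsA n i k) {r : ℕ} (hr : r < n + 2) : (pt p r).1 = r :=
  hp.2.1 r hr

lemma pt_snd_succ (hp : p ∈ pathsA n i k) {r : ℕ} (hr : r ≤ n) :
    (pt p (r + 1)).2 = (pt p r).2 + 1 ∨ (pt p (r + 1)).2 = (pt p r).2 - 1 := by
  rcases hp.2.2.2.2 r hr with h | h
  exacts [Or.inl (by linarith), Or.inr (by linarith)]

lemma exists_pt_snd (hp : p ∈ pathsA n i k) {r : ℕ} (hr : r ≤ n + 1) :
    ∃ m : ℤ, (pt p r).2 = m ∧ m % 2 = (i + k + r) % 2 := by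
  induction r with
  | zero => exact ⟨i + k, by rw [hp.2.2.1]; push_cast; ring, by simp⟩
  | succ r ih =>
    obtain ⟨m, hm, hmod⟩ := ih (by omega)
    rcases pt_snd_succ hp (r := r) (by omega) with h | h
    · exact ⟨m + 1, by rw [h, hm]; push_cast; ring, by push_cast; omega⟩
    · exact ⟨m - 1, by rw [h, hm]; push_cast; ring, by push_cast; omega⟩

lemma exists_pt_snd_eq_add (hp : p ∈ pathsA n i k) (hik : (i, k) ∈ XA n)
    (hq : q ∈ pathsA n i' k') (hik' : (i', k') ∈ XA n) {r : ℕ} (hr : r ≤ n + 1) :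
    ∃ d : ℤ, (pt q r).2 = (pt p r).2 + 2 * d := by
  obtain ⟨m, hm, hmod⟩ := exists_pt_snd hp hr
  obtain ⟨m', hm', hmod'⟩ := exists_pt_snd hq hr
  obtain ⟨-, -, h⟩ := hik
  obtain ⟨-, -, h'⟩ := hik'
  simp only at h h'
  have hd : ((2 * ((m' - m) / 2) : ℤ) : ℝ) = m' - m := by
    rw [show 2 * ((m' - m) / 2) = m' - m by omega]; push_cast; ring
  exact ⟨(m' - m) / 2, by rw [hm, hm']; push_cast at hd ⊢; linarith⟩

lemma strictlyAbove_iff (hp : p ∈ pathsA n i k) (hq : q ∈ pathsA n i' k') :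
    StrictlyAbove p q ↔ ∀ r < n + 2, (pt p r).2 < (pt q r).2 := by
  constructor
  · intro h r hr
    exact h _ (pt_mem (hp.1 ▸ hr)) _ (pt_mem (hq.1 ▸ hr)) (by rw [pt_fst hp hr, pt_fst hq hr])
  · intro h a ha b hb hab
    obtain ⟨r, hr, rfl⟩ := mem_iff_exists_pt.1 ha
    obtain ⟨r', hr', rfl⟩ := mem_iff_exists_pt.1 hb
    rw [hp.1] at hr
    rw [hq.1] at hr'
    rw [pt_fst hp hr, pt_fst hq hr', Nat.cast_inj] at hab
    subst hab
    exact h r hr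

lemma pt_of_replace1 (hp : p ∈ pathsA n i k) (hp' : p' ∈ pathsA n i k)
    {a b : ℝ} (h : Replace1 p p' ((j : ℝ), a) ((j : ℝ), b)) :
    j < n + 2 ∧ (pt p j).2 = a ∧ (pt p' j).2 = b ∧ ∀ r ≠ j, pt p' r = pt p r := by
  obtain ⟨r, hr, hq, hlen, hq', hoth⟩ := h
  rw [hp.1] at hr
  have hrj : r = j := by
    have h : (r : ℝ) = j := by simpa [pt_fst hp hr] using congrArg Prod.fst hq
    exact_mod_cast h
  subst hrj
  refine ⟨hr, by rw [hq], by rw [hq'], fun s hs => ?_⟩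
  by_cases hsn : s < n + 2
  · exact hoth s (hp.1 ▸ hsn) hs
  · rw [pt, pt, List.getD_eq_default _ _ (by rw [hp'.1]; omega),
      List.getD_eq_default _ _ (by rw [hp.1]; omega)]

lemma mem_Cp_of_nbrs (hq : q ∈ pathsA n i' k') (hj : 1 ≤ j) (hjn : j ≤ n) {m : ℤ}
    (hqj : (pt q j).2 = m) (up : Bool)
    (hnbr : ∀ r, (r = j - 1 ∨ r = j + 1) →
      if up then (m : ℝ) - 1 < (pt q r).2 else (pt q r).2 < m + 1) :
    (j, m) ∈ Cp (.A n) q up := by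
  have h₁ := pt_snd_succ hq (r := j - 1) (by omega)
  have h₂ := pt_snd_succ hq (r := j) hjn
  rw [show j - 1 + 1 = j by omega] at h₁
  have hn₁ := hnbr (j - 1) (Or.inl rfl)
  have hn₂ := hnbr (j + 1) (Or.inr rfl)
  refine ⟨hj, hjn, Prod.ext (pt_fst hq (by omega)) hqj, ?_, ?_⟩ <;> cases up <;>
    simp only [Bool.false_eq_true, if_false, if_true] at hn₁ hn₂ ⊢ <;> rw [hqj] at h₁ h₂ <;>
    rcases h₁ with h₁ | h₁ <;> rcases h₂ with h₂ | h₂ <;> linarith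

lemma nbr_snd_of_mem_Cp {m : ℤ} {up : Bool} (hp : (j, m) ∈ Cp (.A n) p up) {r : ℕ}
    (hr : r = j - 1 ∨ r = j + 1) :
    (pt p r).2 = m + if up then 1 else -1 := by
  obtain ⟨-, -, -, h₁, h₂⟩ := hp
  rcases hr with rfl | rfl
  exacts [h₁, h₂]

lemma not_strictlyAbove_iff_of_replace1 (hp : p ∈ pathsA n i k) (hp' : p' ∈ pathsA n i k)
    (hq : q ∈ pathsA n i' k') {a b : ℝ} (h : Replace1 p p' ((j : ℝ), a) ((j : ℝ), b)) :
    (StrictlyAbove p q → (¬ StrictlyAbove p' q ↔ (pt q j).2 ≤ b)) ∧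
    (StrictlyAbove q p → (¬ StrictlyAbove q p' ↔ b ≤ (pt q j).2)) := by
  obtain ⟨hj, -, hp'j, hsame⟩ := pt_of_replace1 hp hp' h
  simp only [strictlyAbove_iff hp' hq, strictlyAbove_iff hq hp', strictlyAbove_iff hp hq,
    strictlyAbove_iff hq hp, not_forall, not_lt, exists_prop]
  refine ⟨fun hpq => ⟨?_, fun hle => ⟨j, hj, hp'j ▸ hle⟩⟩,
    fun hqp => ⟨?_, fun hle => ⟨j, hj, hp'j ▸ hle⟩⟩⟩ <;> rintro ⟨r, hr, hle⟩ <;>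
    rcases eq_or_ne r j with rfl | hrj
  · exact hp'j ▸ hle
  · exact absurd (hpq r hr) (not_lt.2 (hsame r hrj ▸ hle))
  · exact hp'j ▸ hle
  · exact absurd (hqp r hr) (not_lt.2 (hsame r hrj ▸ hle))

lemma not_strictlyAbove_lowered_iff (hik : (i, k) ∈ XA n) (hik' : (i', k') ∈ XA n)
    (hlow : LoweredTo (.A n) i k j l p p') (hq : q ∈ P (.A n) i' k')
    (hpq : StrictlyAbove p q) :
    ¬ StrictlyAbove p' q ↔
      (j, l + (rr (.A n) j : ℤ)) ∈ Cp (.A n) q true ∨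
        (j, l - (rr (.A n) j : ℤ)) ∈ Cp (.A n) q false := by
  obtain ⟨hp, hp', ⟨hC, -⟩, hrep⟩ := hlow
  obtain ⟨hj, hpj, -, -⟩ := pt_of_replace1 hp hp' hrep
  have hjn : 1 ≤ j ∧ j ≤ n := ⟨hC.1, hC.2.1⟩
  simp only [rr, Nat.cast_one] at hC ⊢
  rw [(not_strictlyAbove_iff_of_replace1 hp hp' hq hrep).1 hpq]
  constructor
  · intro hle
    have hlt := (strictlyAbove_iff hp hq).1 hpq
    obtain ⟨d, hd⟩ := exists_pt_snd_eq_add hp hik hq hik' (r := j) (by omega)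
    have hqj : (pt q j).2 = ((l + 1 : ℤ) : ℝ) := by
      have h₁ := hlt j hj
      rw [hd, hpj] at h₁ hle ⊢
      obtain rfl : d = 1 :=
        Int.eq_of_sub_one_lt_of_le (by push_cast; linarith) (by push_cast; linarith)
      push_cast; ring
    refine Or.inl (mem_Cp_of_nbrs hq hjn.1 hjn.2 hqj true fun r hr => ?_)
    have h₁ := hlt r (by omega)
    rw [nbr_snd_of_mem_Cp hC hr] at h₁
    simp only [if_true] at h₁ ⊢
    push_cast at h₁ ⊢
    linarith
  · rintro (⟨-, -, h, -⟩ | ⟨-, -, h, -⟩) <;> rw [h] <;> push_cast <;> linarith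

lemma not_strictlyAbove_raised_iff (hik : (i, k) ∈ XA n) (hik' : (i', k') ∈ XA n)
    (hlow : LoweredTo (.A n) i k j l p' p) (hq : q ∈ P (.A n) i' k')
    (hqp : StrictlyAbove q p) :
    ¬ StrictlyAbove q p' ↔
      (j, l - (rr (.A n) j : ℤ)) ∈ Cp (.A n) q false ∨
        (j, l + (rr (.A n) j : ℤ)) ∈ Cp (.A n) q true := by
  obtain ⟨hp', hp, ⟨hC, -⟩, hrep⟩ := hlow
  obtain ⟨hj, hpj, -, hsame⟩ := pt_of_replace1 hp hp' hrep.symm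
  have hjn : 1 ≤ j ∧ j ≤ n := ⟨hC.1, hC.2.1⟩
  simp only [rr, Nat.cast_one] at hC ⊢
  rw [(not_strictlyAbove_iff_of_replace1 hp hp' hq hrep.symm).2 hqp]
  constructor
  · intro hle
    have hlt := (strictlyAbove_iff hq hp).1 hqp
    obtain ⟨d, hd⟩ := exists_pt_snd_eq_add hp hik hq hik' (r := j) (by omega)
    have hqj : (pt q j).2 = ((l - 1 : ℤ) : ℝ) := by
      have h₁ := hlt j hj
      rw [hd, hpj] at h₁ hle ⊢
      obtain rfl : d = -1 :=
        Int.eq_of_le_of_lt_add_one (by push_cast; linarith) (by push_cast; linarith)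
      push_cast; ring
    refine Or.inl (mem_Cp_of_nbrs hq hjn.1 hjn.2 hqj false fun r hr => ?_)
    have h₁ := hlt r (by omega)
    rw [← hsame r (by omega), nbr_snd_of_mem_Cp hC hr] at h₁
    simp only [Bool.false_eq_true, if_false, if_true] at h₁ ⊢
    push_cast at h₁ ⊢
    linarith
  · rintro (⟨-, -, h, -⟩ | ⟨-, -, h, -⟩) <;> rw [h] <;> push_cast <;> linarith

end TypeA

namespace TypeB

variable {n i i' j : ℕ} {ε : ℝ} {L k k' l m : ℤ} {v : ℝ × ℝ} {p p' q : List (ℝ × ℝ)}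

/-- The column of the `r`-th point (`r < n`) of a path in `𝒫_{N,L}`. -/
def spinCol (n : ℕ) (L : ℤ) (r : ℕ) : ℤ := if L % 4 = 3 then 2 * r else 4 * n - 2 - 2 * r

def EvenNbr (n : ℕ) (x c : ℤ) : Prop :=
  (c = x - 2 ∨ c = x + 2) ∧ 0 ≤ c ∧ c ≤ 4 * n - 2 ∧ (c ≤ 2 * n - 2 ↔ x ≤ 2 * n - 2)

/-- The possible neighbours `w` of a point at height `h` in the even column `x`. -/
def IsStep (n : ℕ) (ε : ℝ) (x : ℤ) (h : ℝ) (w : ℝ × ℝ) : Prop :=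
  (∃ c, EvenNbr n x c ∧ w.1 = c ∧ (w.2 = h + 2 ∨ w.2 = h - 2)) ∨
    ((x = 2 * n - 2 ∨ x = 2 * n) ∧ w.1 = 2 * n - 1 ∧ (w.2 = h + (1 + ε) ∨ w.2 = h - (1 + ε)))

lemma evenNbr_spinCol_iff (hL : L % 2 = 1) {r : ℕ} (hr : r < n) {c : ℤ} :
    EvenNbr n (spinCol n L r) c ↔
      ∃ r' < n, (r' = r + 1 ∨ r = r' + 1) ∧ spinCol n L r' = c := by
  unfold EvenNbr spinCol
  constructor
  · split_ifs with h3
    · rintro ⟨hc | hc, h0, h4, hh⟩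
      · exact ⟨r - 1, by omega, Or.inr (by omega), by omega⟩
      · exact ⟨r + 1, by omega, Or.inl rfl, by omega⟩
    · rintro ⟨hc | hc, h0, h4, hh⟩
      · exact ⟨r + 1, by omega, Or.inl rfl, by omega⟩
      · exact ⟨r - 1, by omega, Or.inr (by omega), by omega⟩
  · rintro ⟨r', hr', hrr, rfl⟩
    split_ifs <;> omega

lemma fst_ne_of_even {x : ℤ} (hx : x % 2 = 0) : (x : ℝ) ≠ 2 * n - 1 := by
  intro h
  have : x = 2 * n - 1 := by exact_mod_cast h
  omega

lemma spin_repr_inj (hε : 0 < ε) (hε' : ε < 1 / 2) {M M' s s' : ℤ} (hs : s = 1 ∨ s = -1)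
    (hs' : s' = 1 ∨ s' = -1) (h : (M : ℝ) + s * ε = M' + s' * ε) : M = M' ∧ s = s' := by
  have key : ((M - M' : ℤ) : ℝ) = (s' - s : ℤ) * ε := by push_cast; linarith
  have hlt : |((M - M' : ℤ) : ℝ)| < 1 := by
    rw [key, abs_mul, abs_of_pos hε]
    rcases hs with rfl | rfl <;> rcases hs' with rfl | rfl <;> norm_num <;> linarith
  have hMM : M - M' = 0 := by
    rw [← Int.cast_abs] at hlt
    have : |M - M'| < 1 := by exact_mod_cast hlt
    exact Int.abs_lt_one_iff.1 this
  refine ⟨by omega, ?_⟩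
  rw [hMM, Int.cast_zero, eq_comm, mul_eq_zero] at key
  rcases key with h | h
  · have : s' - s = 0 := by exact_mod_cast h
    omega
  · exact absurd h hε.ne'

namespace SpinPath

lemma pt_fst (hq : q ∈ pathsBspin n ε L) {r : ℕ} (hr : r < n) :
    (pt q r).1 = spinCol n L r := by
  have h := hq.2.1
  unfold spinCol
  split_ifs at h ⊢ <;> rw [h r hr] <;> push_cast <;> ring

lemma eq_pt_of_fst_eq (hq : q ∈ pathsBspin n ε L) (hv : v ∈ q) (hvx : v.1 = 2 * n - 1) :
    v = pt q n := by
  obtain ⟨r, hr, rfl⟩ := mem_iff_exists_pt.1 hv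
  rw [hq.1] at hr
  rcases (show r < n ∨ r = n by omega) with hr | rfl
  · rw [pt_fst hq hr] at hvx
    have : spinCol n L r = 2 * n - 1 := by exact_mod_cast hvx
    unfold spinCol at this
    split_ifs at this <;> omega
  · rfl

lemma exists_index (hq : q ∈ pathsBspin n ε L) (hv : v ∈ q) (hvx : v.1 ≠ 2 * n - 1) :
    ∃ r < n, pt q r = v := by
  obtain ⟨r, hr, rfl⟩ := mem_iff_exists_pt.1 hv
  rw [hq.1] at hr
  refine ⟨r, lt_of_le_of_ne (by omega) ?_, rfl⟩
  rintro rfl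
  exact hvx hq.2.2.1

lemma exists_index_of_even (hq : q ∈ pathsBspin n ε L) (hv : v ∈ q) {x : ℤ} (hvx : v.1 = x)
    (hx : x % 2 = 0) : ∃ r < n, pt q r = v ∧ spinCol n L r = x := by
  obtain ⟨r, hr, rfl⟩ := exists_index hq hv (hvx ▸ fst_ne_of_even hx)
  exact ⟨r, hr, rfl, by exact_mod_cast (pt_fst hq hr).symm.trans hvx⟩

lemma fst_lt_iff (hq : q ∈ pathsBspin n ε L) (hv : v ∈ q) (hvx : v.1 ≠ 2 * n - 1) :
    v.1 < 2 * n - 1 ↔ L % 4 = 3 := by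
  obtain ⟨r, hr, rfl⟩ := exists_index hq hv hvx
  rw [pt_fst hq hr]
  unfold spinCol
  split_ifs with h3
  · simp only [h3, iff_true]
    exact_mod_cast (show 2 * (r : ℤ) < 2 * n - 1 by omega)
  · simp only [h3, iff_false, not_lt]
    exact_mod_cast (show (2 * n - 1 : ℤ) ≤ 4 * n - 2 - 2 * r by omega)

lemma pt_snd_adj (hq : q ∈ pathsBspin n ε L) {r r' : ℕ} (hr : r < n) (hr' : r' < n)
    (h : r' = r + 1 ∨ r = r' + 1) :
    (pt q r').2 = (pt q r).2 + 2 ∨ (pt q r').2 = (pt q r).2 - 2 := by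
  rcases h with rfl | rfl
  · rcases hq.2.2.2.2.1 r (by omega) with h | h
    exacts [Or.inl (by linarith), Or.inr (by linarith)]
  · rcases hq.2.2.2.2.1 r' (by omega) with h | h
    exacts [Or.inr (by linarith), Or.inl (by linarith)]

lemma exists_pt_snd (hq : q ∈ pathsBspin n ε L) (hL : L % 2 = 1) {r : ℕ} (hr : r < n) :
    ∃ m : ℤ, (pt q r).2 = m ∧ m % 4 = (2 * n + 2 + spinCol n L r) % 4 := by
  suffices ∃ m : ℤ, (pt q r).2 = m ∧ m % 4 = (L + 2 * n - 1 + 2 * r) % 4 by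
    obtain ⟨m, hm, hmod⟩ := this
    refine ⟨m, hm, ?_⟩
    unfold spinCol
    split_ifs <;> omega
  induction r with
  | zero => exact ⟨L + 2 * n - 1, by rw [hq.2.2.2.1]; push_cast; ring, by simp⟩
  | succ r ih =>
    obtain ⟨m, hm, hmod⟩ := ih (by omega)
    rcases pt_snd_adj hq (r := r) (by omega) hr (Or.inl rfl) with h | h
    · exact ⟨m + 2, by rw [h, hm]; push_cast; ring, by push_cast; omega⟩
    · exact ⟨m - 2, by rw [h, hm]; push_cast; ring, by push_cast; omega⟩

lemma exists_mem_evenNbr (hq : q ∈ pathsBspin n ε L) (hL : L % 2 = 1) (hv : v ∈ q)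
    {x : ℤ} (hvx : v.1 = x) (hx : x % 2 = 0) {c : ℤ} (hc : EvenNbr n x c) :
    ∃ u ∈ q, u.1 = c ∧ (u.2 = v.2 + 2 ∨ u.2 = v.2 - 2) := by
  obtain ⟨r, hr, rfl, rfl⟩ := exists_index_of_even hq hv hvx hx
  obtain ⟨r', hr', hrr, rfl⟩ := (evenNbr_spinCol_iff hL hr).1 hc
  exact ⟨pt q r', pt_mem (by rw [hq.1]; omega), pt_fst hq hr', pt_snd_adj hq hr hr' hrr⟩

lemma hasNeighbours (hq : q ∈ pathsBspin n ε L) (hL : L % 2 = 1) (hv : v ∈ q) {x : ℤ}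
    (hvx : v.1 = x) (hx : x % 2 = 0) (hx₂ : 2 ≤ x) (hx₄ : x ≤ 4 * n - 4) :
    HasNeighbours q v (IsStep n ε x v.2) := by
  obtain ⟨r, hr, rfl, rfl⟩ := exists_index_of_even hq hv hvx hx
  have hr₁ : 1 ≤ r := by unfold spinCol at hx₂ hx₄; split_ifs at hx₂ hx₄ <;> omega
  have heven : ∀ r' < n, (r' = r + 1 ∨ r = r' + 1) →
      IsStep n ε (spinCol n L r) (pt q r).2 (pt q r') :=
    fun r' hr' hrr => Or.inl ⟨spinCol n L r', (evenNbr_spinCol_iff hL hr).2 ⟨r', hr', hrr, rfl⟩,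
      pt_fst hq hr', pt_snd_adj hq hr hr' hrr⟩
  refine ⟨r, hr₁, by rw [hq.1]; omega, rfl, heven (r - 1) (by omega) (Or.inr (by omega)), ?_⟩
  rcases (show r + 1 < n ∨ r + 1 = n by omega) with hrn | hrn
  · exact heven (r + 1) hrn (Or.inl rfl)
  · refine Or.inr ⟨?_, by rw [hrn]; exact hq.2.2.1, ?_⟩
    · unfold spinCol
      split_ifs <;> omega
    · have h := hq.2.2.2.2.2
      rw [show n - 1 = r by omega, ← hrn] at h
      rcases h with h | h
      exacts [Or.inl (by linarith), Or.inr (by linarith)]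

lemma exists_spin_repr (hq : q ∈ pathsBspin n ε L) (hL : L % 2 = 1) (hn : 1 ≤ n) :
    ∃ M s : ℤ, (s = 1 ∨ s = -1) ∧ M % 2 = 1 ∧ (M + s) % 4 = (L + 3) % 4 ∧
      (pt q n).2 = M + s * ε ∧
      pt q (n - 1) = (((spinCol n L (n - 1) : ℤ) : ℝ), ((M - s : ℤ) : ℝ)) := by
  obtain ⟨m, hm, hmod⟩ := exists_pt_snd hq hL (r := n - 1) (by omega)
  have hcol := pt_fst hq (r := n - 1) (by omega)
  have h := hq.2.2.2.2.2
  have hs : spinCol n L (n - 1) = if L % 4 = 3 then 2 * n - 2 else 2 * n := by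
    unfold spinCol; split_ifs <;> omega
  rw [hs] at hmod
  rcases h with h | h
  · refine ⟨m + 1, 1, Or.inl rfl, ?_, ?_, by rw [hm] at h; push_cast; linarith,
      Prod.ext hcol (by rw [hm]; push_cast; ring)⟩ <;> split_ifs at hmod <;> omega
  · refine ⟨m - 1, -1, Or.inr rfl, ?_, ?_, by rw [hm] at h; push_cast; linarith,
      Prod.ext hcol (by rw [hm]; push_cast; ring)⟩ <;> split_ifs at hmod <;> omega

lemma spin_class (hq : q ∈ pathsBspin n ε L) (hL : L % 2 = 1) (hn : 1 ≤ n) (hε : 0 < ε)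
    (hε' : ε < 1 / 2) {M s : ℤ} (hs : s = 1 ∨ s = -1) (hM : (pt q n).2 = M + s * ε) :
    (M + s) % 4 = (L + 3) % 4 ∧
      pt q (n - 1) = (((spinCol n L (n - 1) : ℤ) : ℝ), ((M - s : ℤ) : ℝ)) := by
  obtain ⟨M', s', hs', -, hmod, hM', hprev⟩ := exists_spin_repr hq hL hn
  obtain ⟨rfl, rfl⟩ := spin_repr_inj hε hε' hs hs' (hM.symm.trans hM')
  exact ⟨hmod, hprev⟩

end SpinPath

lemma decomp (hp : p ∈ P (.B n ε) i k) (hik : (i, k) ∈ XB n) :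
    (i = n ∧ k % 2 = 1 ∧ p ∈ pathsBspin n ε k) ∨
    (i < n ∧ k % 2 = 0 ∧ ∃ a b, a ∈ pathsBspin n ε (k - (2 * n - 2 * i - 1)) ∧
      b ∈ pathsBspin n ε (k + (2 * n - 2 * i - 1)) ∧ p = a ++ b.reverse ∧
      (pt b n).2 < (pt a n).2) := by
  change p ∈ pathsB n ε i k at hp
  unfold pathsB at hp
  rcases hik with ⟨rfl, hk⟩ | ⟨-, hi, hk⟩
  · rw [if_pos rfl] at hp
    exact Or.inl ⟨rfl, hk, hp⟩
  · rw [if_neg hi.ne] at hp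
    obtain ⟨a, b, ha, hb, rfl, -, hab⟩ := hp
    exact Or.inr ⟨hi, hk, a, b, ha, hb, rfl, by linarith⟩

/-- Every point of `p` lies on one of the (one or two) paths of type `𝒫_{N,L}` making up `p`;
off the column `2n - 1`, that path contains all points of `p` in the same column. -/
lemma exists_component (hp : p ∈ P (.B n ε) i k) (hik : (i, k) ∈ XB n) (hv : v ∈ p) :
    ∃ L q, L % 2 = 1 ∧ q ∈ pathsBspin n ε L ∧ v ∈ q ∧ (∀ u ∈ q, u ∈ p) ∧
      (∀ Q, HasNeighbours q v Q → HasNeighbours p v Q) ∧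
      (v.1 ≠ 2 * n - 1 → ∀ u ∈ p, u.1 = v.1 → u ∈ q) := by
  rcases decomp hp hik with ⟨-, hk, hp⟩ | ⟨-, hk, a, b, ha, hb, rfl, -⟩
  · exact ⟨k, p, hk, hp, hv, fun u hu => hu, fun Q h => h, fun _ u hu _ => hu⟩
  have hsides : ∀ u ∈ a, ∀ u' ∈ b, u.1 ≠ 2 * n - 1 → u'.1 ≠ u.1 := by
    intro u hu u' hu' hux he
    have h := (SpinPath.fst_lt_iff ha hu hux).symm.trans
      (he ▸ SpinPath.fst_lt_iff hb hu' (he ▸ hux))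
    by_cases h3 : (k - (2 * n - 2 * i - 1)) % 4 = 3
    · have := h.1 h3; omega
    · have := mt h.2 h3; omega
  rcases List.mem_append.1 hv with hva | hvb
  · refine ⟨_, a, by omega, ha, hva, fun u hu => List.mem_append_left _ hu,
      fun Q h => h.append_right _, fun hvx u hu hux => ?_⟩
    rcases List.mem_append.1 hu with hua | hub
    · exact hua
    · exact absurd hux (hsides v hva u (List.mem_reverse.1 hub) hvx)
  · rw [List.mem_reverse] at hvb
    refine ⟨_, b, by omega, hb, hvb, fun u hu => List.mem_append_right _ (List.mem_reverse.2 hu),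
      fun Q h => h.reverse.append_left _, fun hvx u hu hux => ?_⟩
    rcases List.mem_append.1 hu with hua | hub
    · exact absurd hux.symm (hsides u hua v hvb (hux ▸ hvx))
    · exact List.mem_reverse.1 hub

lemma exists_snd_of_even (hp : p ∈ P (.B n ε) i k) (hik : (i, k) ∈ XB n) (hv : v ∈ p) {x : ℤ}
    (hvx : v.1 = x) (hx : x % 2 = 0) : ∃ m : ℤ, v.2 = m ∧ m % 4 = (2 * n + 2 + x) % 4 := by
  obtain ⟨L, q, hL, hq, hvq, -⟩ := exists_component hp hik hv
  obtain ⟨r, hr, rfl, rfl⟩ := SpinPath.exists_index_of_even hq hvq hvx hx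
  exact SpinPath.exists_pt_snd hq hL hr

lemma eq_of_fst_eq (hp : p ∈ P (.B n ε) i k) (hik : (i, k) ∈ XB n) {u : ℝ × ℝ} (hu : u ∈ p)
    (hv : v ∈ p) (huv : u.1 = v.1) {x : ℤ} (hvx : v.1 = x) (hx : x % 2 = 0) : u = v := by
  obtain ⟨L, q, -, hq, hvq, -, -, hsame⟩ := exists_component hp hik hv
  have huq := hsame (hvx ▸ fst_ne_of_even hx) u hu huv
  obtain ⟨r, hr, rfl, hrx⟩ := SpinPath.exists_index_of_even hq hvq hvx hx
  obtain ⟨r', hr', rfl, hrx'⟩ := SpinPath.exists_index_of_even hq huq (huv.trans hvx) hx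
  have : r' = r := by unfold spinCol at hrx hrx'; split_ifs at hrx hrx' <;> omega
  rw [this]

lemma exists_mem_evenNbr (hp : p ∈ P (.B n ε) i k) (hik : (i, k) ∈ XB n) (hv : v ∈ p) {x : ℤ}
    (hvx : v.1 = x) (hx : x % 2 = 0) {c : ℤ} (hc : EvenNbr n x c) :
    ∃ u ∈ p, u.1 = c ∧ (u.2 = v.2 + 2 ∨ u.2 = v.2 - 2) := by
  obtain ⟨L, q, hL, hq, hvq, hsub, -⟩ := exists_component hp hik hv
  obtain ⟨u, hu, h⟩ := SpinPath.exists_mem_evenNbr hq hL hvq hvx hx hc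
  exact ⟨u, hsub u hu, h⟩

lemma hasNeighbours (hp : p ∈ P (.B n ε) i k) (hik : (i, k) ∈ XB n) (hv : v ∈ p) {x : ℤ}
    (hvx : v.1 = x) (hx : x % 2 = 0) (hx₂ : 2 ≤ x) (hx₄ : x ≤ 4 * n - 4) :
    HasNeighbours p v (IsStep n ε x v.2) := by
  obtain ⟨L, q, hL, hq, hvq, -, hnbr, -⟩ := exists_component hp hik hv
  exact hnbr _ (SpinPath.hasNeighbours hq hL hvq hvx hx hx₂ hx₄)

lemma exists_spin_repr (hn : 1 ≤ n) (hp : p ∈ P (.B n ε) i k) (hik : (i, k) ∈ XB n)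
    (hv : v ∈ p) (hvx : v.1 = 2 * n - 1) :
    ∃ M s : ℤ, (s = 1 ∨ s = -1) ∧ M % 2 = 1 ∧ v.2 = M + s * ε := by
  obtain ⟨L, q, hL, hq, hvq, -⟩ := exists_component hp hik hv
  obtain ⟨M, s, hs, hM, -, hv', -⟩ := SpinPath.exists_spin_repr hq hL hn
  exact ⟨M, s, hs, hM, SpinPath.eq_pt_of_fst_eq hq hvq hvx ▸ hv'⟩

/-- The point preceding `(2n - 1, M + sε)` on its path of type `𝒫_{N,L}`. -/
lemma inner_mem (hn : 1 ≤ n) (hε : 0 < ε) (hε' : ε < 1 / 2) (hp : p ∈ P (.B n ε) i k)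
    (hik : (i, k) ∈ XB n) (hv : v ∈ p) (hvx : v.1 = 2 * n - 1) {M s : ℤ}
    (hs : s = 1 ∨ s = -1) (hM : v.2 = M + s * ε) :
    ((((if (M + s) % 4 = 2 then 2 * n - 2 else 2 * n : ℤ)) : ℝ), ((M - s : ℤ) : ℝ)) ∈ p := by
  obtain ⟨L, q, hL, hq, hvq, hsub, -⟩ := exists_component hp hik hv
  rw [SpinPath.eq_pt_of_fst_eq hq hvq hvx] at hM
  obtain ⟨hmod, hprev⟩ := SpinPath.spin_class hq hL hn hε hε' hs hM
  convert hsub _ (pt_mem (by rw [hq.1]; omega : n - 1 < q.length)) using 1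
  rw [hprev]
  congr 2
  unfold spinCol
  split_ifs <;> omega

lemma exists_mem_spin (hp : p ∈ P (.B n ε) i k) (hik : (i, k) ∈ XB n) :
    ∃ v ∈ p, v.1 = 2 * n - 1 := by
  rcases decomp hp hik with ⟨-, -, hp⟩ | ⟨-, -, a, b, ha, -, rfl, -⟩
  · exact ⟨pt p n, pt_mem (by rw [hp.1]; omega), hp.2.2.1⟩
  · exact ⟨pt a n, List.mem_append_left _ (pt_mem (by rw [ha.1]; omega)), ha.2.2.1⟩

lemma spin_snd_cases (hn : 1 ≤ n) (hε : 0 < ε) (hε' : ε < 1 / 2) (hp : p ∈ P (.B n ε) i k)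
    (hik : (i, k) ∈ XB n) (hv : v ∈ p) (hvx : v.1 = 2 * n - 1) (hl : l % 2 = 0)
    (h₁ : l - 1 - ε ≤ v.2) (h₂ : v.2 ≤ l + 1 + ε) :
    v.2 = l - 1 - ε ∨ v.2 = l - 1 + ε ∨ v.2 = l + 1 - ε ∨ v.2 = l + 1 + ε := by
  obtain ⟨M, s, hs, hM, hv₂⟩ := exists_spin_repr hn hp hik hv hvx
  have hlo : ((l - 2 : ℤ) : ℝ) < M := by
    rcases hs with rfl | rfl <;> push_cast at hv₂ ⊢ <;> linarith
  have hhi : (M : ℝ) < ((l + 2 : ℤ) : ℝ) := by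
    rcases hs with rfl | rfl <;> push_cast at hv₂ ⊢ <;> linarith
  have hM' : M = l - 1 ∨ M = l + 1 := by
    have := (Int.cast_lt (R := ℝ)).1 hlo
    have := (Int.cast_lt (R := ℝ)).1 hhi
    omega
  rw [hv₂]
  rcases hM' with rfl | rfl <;> rcases hs with rfl | rfl <;> push_cast
  · exact Or.inr (Or.inl (by ring))
  · exact Or.inl (by ring)
  · exact Or.inr (Or.inr (Or.inr (by ring)))
  · exact Or.inr (Or.inr (Or.inl (by ring)))

lemma spin_not_mem_Ioo (hn : 1 ≤ n) (hε : 0 < ε) (hε' : ε < 1 / 2) (hp : p ∈ P (.B n ε) i k)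
    (hik : (i, k) ∈ XB n) (hv : v ∈ p) (hvx : v.1 = 2 * n - 1) (hl : l % 2 = 0)
    (h₁ : l - 1 + ε < v.2) (h₂ : v.2 < l + 1 - ε) : False := by
  rcases spin_snd_cases hn hε hε' hp hik hv hvx hl (by linarith) (by linarith) with
    h | h | h | h <;> rw [h] at h₁ h₂ <;> linarith

/-- The shift between `k` and the labels `k ∓ (2n - 2i - 1)` of the paths making up a path
of `𝒫_{i,k}`. -/
def spinShift (n i : ℕ) : ℤ := if i = n then 0 else 2 * n - 2 * i - 1

/-- The lowest (resp. highest) point of `p` in the column `2n - 1` lies on the path of type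
`𝒫_{N, k - shift}` (resp. `𝒫_{N, k + shift}`), which fixes its class modulo 4. -/
lemma spin_class (hn : 1 ≤ n) (hε : 0 < ε) (hε' : ε < 1 / 2) (hp : p ∈ P (.B n ε) i k)
    (hik : (i, k) ∈ XB n) (hv : v ∈ p) (hvx : v.1 = 2 * n - 1) {M s : ℤ} (hs : s = 1 ∨ s = -1)
    (hM : v.2 = M + s * ε) :
    ((∀ w ∈ p, w.1 = 2 * n - 1 → w.2 ≤ v.2) → (M + s) % 4 = (k - spinShift n i + 3) % 4) ∧
    ((∀ w ∈ p, w.1 = 2 * n - 1 → v.2 ≤ w.2) → (M + s) % 4 = (k + spinShift n i + 3) % 4) := by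
  rcases decomp hp hik with ⟨rfl, hk, hp⟩ | ⟨hi, hk, a, b, ha, hb, rfl, hab⟩
  · rw [SpinPath.eq_pt_of_fst_eq hp hv hvx] at hM
    have := (SpinPath.spin_class hp hk hn hε hε' hs hM).1
    simp only [spinShift, if_true, sub_zero, add_zero]
    exact ⟨fun _ => this, fun _ => this⟩
  have hd : spinShift n i = 2 * n - 2 * i - 1 := if_neg hi.ne
  have hma : pt a n ∈ a ++ b.reverse := List.mem_append_left _ (pt_mem (by rw [ha.1]; omega))
  have hmb : pt b n ∈ a ++ b.reverse :=
    List.mem_append_right _ (List.mem_reverse.2 (pt_mem (by rw [hb.1]; omega)))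
  rw [hd]
  rcases List.mem_append.1 hv with hva | hvb
  · rw [SpinPath.eq_pt_of_fst_eq ha hva hvx] at hM
    have := (SpinPath.spin_class ha (by omega) hn hε hε' hs hM).1
    refine ⟨fun _ => by omega, fun hmin => absurd (hmin _ hmb hb.2.2.1) ?_⟩
    rw [SpinPath.eq_pt_of_fst_eq ha hva hvx]
    exact not_le.2 hab
  · rw [List.mem_reverse] at hvb
    rw [SpinPath.eq_pt_of_fst_eq hb hvb hvx] at hM
    have := (SpinPath.spin_class hb (by omega) hn hε hε' hs hM).1
    refine ⟨fun hmax => absurd (hmax _ hma ha.2.2.1) ?_, fun _ => by omega⟩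
    rw [SpinPath.eq_pt_of_fst_eq hb hvb hvx]
    exact not_le.2 hab

lemma spinShift_ne_of_snakePos (hS : SnakePos (.B n ε) (i, k) (i', k')) (hik : (i, k) ∈ XB n)
    (hik' : (i', k') ∈ XB n) : (k - spinShift n i) % 4 ≠ (k' + spinShift n i') % 4 := by
  simp only [SnakePos] at hS
  unfold spinShift
  rcases hik with ⟨rfl, -⟩ | ⟨-, hi, -⟩ <;> rcases hik' with ⟨rfl, -⟩ | ⟨-, hi', -⟩
  · simp only [and_self, if_true] at hS
    simp only [if_true]
    omega
  · rw [if_neg (by omega), if_pos (Or.inl rfl), abs_of_neg (by omega)] at hS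
    simp only [if_true, if_neg hi'.ne]
    omega
  · rw [if_neg (by omega), if_pos (Or.inr rfl), abs_of_pos (by omega)] at hS
    simp only [if_true, if_neg hi.ne]
    omega
  · rw [if_neg (by omega), if_neg (by omega)] at hS
    simp only [if_neg hi.ne, if_neg hi'.ne]
    rcases abs_cases ((i' : ℤ) - i) with ⟨h, -⟩ | ⟨h, -⟩ <;> rw [h] at hS <;> omega

/-- This is where the snake condition is used: the paths strictly between `t` and `s` would have
no room in the column `2n - 1`, and the classes given by `spin_class` contradict the snake
position of `w (t + 1)` with respect to `w t`. -/
lemma not_mem_of_isSnake (hS : (Setting.B n ε).valid) {T : ℕ}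
    {w : Fin T → ℕ × ℤ} (hw : IsSnake (.B n ε) w) {ps : Fin T → List (ℝ × ℝ)}
    (hmem : ∀ u, ps u ∈ P (.B n ε) (w u).1 (w u).2) (hno : NonOverlapping ps) {t s : Fin T}
    (hts : t < s) (hl : l % 2 = 0) (ht : (2 * (n : ℝ) - 1, (l : ℝ) - 1 + ε) ∈ ps t) :
    (2 * (n : ℝ) - 1, (l : ℝ) + 1 - ε) ∉ ps s := by
  obtain ⟨hn, hε, hε'⟩ := hS
  replace hn : 1 ≤ n := by omega
  intro hs
  have gap : ∀ u, ∀ v ∈ ps u, v.1 = 2 * n - 1 → l - 1 + ε < v.2 → v.2 < l + 1 - ε → False :=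
    fun u v hv hvx => spin_not_mem_Ioo hn hε hε' (hmem u) (hw.1 u) hv hvx hl
  have hmax : ∀ v ∈ ps t, v.1 = 2 * n - 1 → v.2 ≤ l - 1 + ε :=
    fun v hv hvx => not_lt.1 fun h => gap t v hv hvx h (hno t s hts v hv _ hs hvx)
  have hmin : ∀ v ∈ ps s, v.1 = 2 * n - 1 → l + 1 - ε ≤ v.2 :=
    fun v hv hvx => not_lt.1 fun h => gap s v hv hvx (hno t s hts _ ht v hv hvx.symm) h
  have hct := (spin_class hn hε hε' (hmem t) (hw.1 t) ht rfl (M := l - 1) (Or.inl rfl)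
    (by push_cast; ring)).1 hmax
  have hcs := (spin_class hn hε hε' (hmem s) (hw.1 s) hs rfl (M := l + 1) (Or.inr rfl)
    (by push_cast; ring)).2 hmin
  have hadj : (s : ℕ) = t + 1 := by
    by_contra h
    have hts' : (t : ℕ) < s := hts
    let u : Fin T := ⟨t + 1, by omega⟩
    obtain ⟨v, hv, hvx⟩ := exists_mem_spin (hmem u) (hw.1 u)
    exact gap u v hv hvx (hno t u (Fin.lt_def.2 (by simp [u])) _ ht v hv hvx.symm)
      (hno u s (Fin.lt_def.2 (by simp [u]; omega)) v hv _ hs hvx)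
  have hsnake := hw.2 t (by omega)
  rw [show (⟨t + 1, _⟩ : Fin T) = s from Fin.ext hadj.symm] at hsnake
  exact spinShift_ne_of_snakePos hsnake (hw.1 t) (hw.1 s) (by omega)

lemma mem_W (hjl : (j, l) ∈ W (.B n ε)) : l % 2 = 0 ∧ (j = n ∨ 1 ≤ j ∧ j < n) := by
  change (j, l - ((if j = n then 1 else 2 : ℕ) : ℤ)) ∈ XB n at hjl
  split_ifs at hjl with hj
  · rcases hjl with ⟨-, h⟩ | ⟨-, h, -⟩
    exacts [⟨by omega, Or.inl hj⟩, absurd hj h.ne]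
  · rcases hjl with ⟨h, -⟩ | ⟨h₁, h₂, h⟩
    exacts [absurd h hj, ⟨by omega, Or.inr ⟨h₁, h₂⟩⟩]

lemma iotaB_of_lt (hj : 1 ≤ j) (hjn : j < n) (m : ℤ) :
    ∃ x : ℤ, iotaB n (j, m) = (x, m) ∧ x % 2 = 0 ∧ 2 ≤ x ∧ x ≤ 4 * n - 4 ∧
      (x = 2 * n - 2 ∨ x = 2 * n ↔ j = n - 1) ∧ (iotaB n (j, m + 4)).1 = x := by
  simp only [iotaB, if_neg hjn.ne]
  split_ifs with h h' h'
  · exact ⟨_, rfl, by omega, by omega, by omega, by omega, rfl⟩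
  · omega
  · omega
  · exact ⟨_, rfl, by omega, by omega, by omega, by omega, rfl⟩

lemma mem_Cp_spin_iff {up : Bool} :
    (n, m) ∈ Cp (.B n ε) q up ↔ m % 2 = 1 ∧
      if up then (2 * (n : ℝ) - 1, (m : ℝ) - ε) ∈ q ∧ (2 * (n : ℝ) - 1, (m : ℝ) + ε) ∉ q
      else (2 * (n : ℝ) - 1, (m : ℝ) + ε) ∈ q ∧ (2 * (n : ℝ) - 1, (m : ℝ) - ε) ∉ q := by
  simp only [Cp, Set.mem_ofPred_eq, XB, iotaB, if_true, true_and, lt_irrefl, false_and,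
    and_false, or_false, ne_eq, not_true_eq_false, exists_false, false_or]

lemma mem_of_mem_Cp (hjn : j ≠ n) {up : Bool} (h : (j, m) ∈ Cp (.B n ε) q up) :
    (((iotaB n (j, m)).1 : ℝ), (m : ℝ)) ∈ q := by
  rcases h.2 with ⟨r, -, hr, hpt, -⟩ | ⟨h, -⟩
  · have hm : (iotaB n (j, m)).2 = m := by unfold iotaB; split_ifs <;> rfl
    have h := pt_mem (p := q) (r := r) (by omega)
    rwa [hpt, hm] at h
  · exact absurd h hjn

lemma mem_Cp_of_nbrs (hq : q ∈ P (.B n ε) i k) (hik : (i, k) ∈ XB n) (hj : 1 ≤ j)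
    (hjn : j < n) (hm : m % 2 = 0) (hb : (((iotaB n (j, m)).1 : ℝ), (m : ℝ)) ∈ q) (up : Bool)
    (hnbr : ∀ w ∈ q, IsStep n ε (iotaB n (j, m)).1 m w → if up then (m : ℝ) < w.2 else w.2 < m) :
    (j, m) ∈ Cp (.B n ε) q up := by
  obtain ⟨x, hx, hxe, hx₂, hx₄, -⟩ := iotaB_of_lt hj hjn m
  rw [hx] at hb hnbr
  obtain ⟨r, hr₁, hr₂, hpt, h₁, h₂⟩ := hasNeighbours hq hik hb rfl hxe hx₂ hx₄
  have h₁ := hnbr _ (pt_mem (by omega)) h₁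
  have h₂ := hnbr _ (pt_mem (by omega)) h₂
  refine ⟨Or.inr ⟨hj, hjn, hm⟩, Or.inl ⟨r, hr₁, hr₂, by rw [hx, hpt], ?_⟩⟩
  rw [hx, hpt]
  refine ⟨by omega, fun h => ?_, by omega, ?_⟩
  · have : x = 2 * n - 1 := by exact_mod_cast h
    omega
  · cases up <;> simp only [Bool.false_eq_true, if_false, if_true] at h₁ h₂ ⊢ <;> exact ⟨h₁, h₂⟩

/-- The two points `(2n - 1, l ∓ 1 ∓ ε)` are preceded by the same point on their paths. -/
lemma exists_mem_mem_of_spin (hn : 1 ≤ n) (hε : 0 < ε) (hε' : ε < 1 / 2)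
    (hp : p ∈ P (.B n ε) i k) (hik : (i, k) ∈ XB n) (hq : q ∈ P (.B n ε) i' k')
    (hik' : (i', k') ∈ XB n) (h : (2 * (n : ℝ) - 1, (l : ℝ) - 1 - ε) ∈ p)
    (h' : (2 * (n : ℝ) - 1, (l : ℝ) + 1 + ε) ∈ q) : ∃ u ∈ p, u ∈ q := by
  have h₁ := inner_mem hn hε hε' hp hik h rfl (M := l - 1) (s := -1) (Or.inr rfl)
    (by push_cast; ring)
  have h₂ := inner_mem hn hε hε' hq hik' h' rfl (M := l + 1) (s := 1) (Or.inl rfl)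
    (by push_cast; ring)
  refine ⟨_, h₁, ?_⟩
  convert h₂ using 3
  · split_ifs <;> omega
  · ring

lemma loweredTo_even_spec (hlow : LoweredTo (.B n ε) i k j l p p') (hjn : j ≠ n) {x : ℤ}
    (hx : (iotaB n (j, l - 2)).1 = x) :
    ((x : ℝ), (l : ℝ) - 2) ∈ p ∧ ((x : ℝ), (l : ℝ) + 2) ∈ p' ∧
    (∀ a ∈ p', a ∈ p ∨ a = ((x : ℝ), (l : ℝ) + 2) ∨
      (j = n - 1 ∧ a = (2 * (n : ℝ) - 1, (l : ℝ) + 1 - ε))) ∧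
    (∀ a ∈ p, a ∈ p' ∨ a = ((x : ℝ), (l : ℝ) - 2) ∨
      (j = n - 1 ∧ a = (2 * (n : ℝ) - 1, (l : ℝ) - 1 + ε))) ∧
    (j = n - 1 → (2 * (n : ℝ) - 1, (l : ℝ) - 1 + ε) ∈ p ∧
      (2 * (n : ℝ) - 1, (l : ℝ) + 1 - ε) ∈ p') := by
  obtain ⟨-, -, -, hrep⟩ := hlow
  change (if j = n then _ else if j = n - 1 then _ else _) at hrep
  rw [if_neg hjn, hx] at hrep
  split_ifs at hrep with hjm
  · obtain ⟨h₁, h₂, h₁', h₂', hsub⟩ := hrep.mem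
    obtain ⟨-, -, -, -, hsub'⟩ := hrep.symm.mem
    refine ⟨h₁, h₁', fun a ha => ?_, fun a ha => ?_, fun _ => ⟨h₂, h₂'⟩⟩
    · rcases hsub a ha with h | h | h
      exacts [Or.inl h, Or.inr (Or.inl h), Or.inr (Or.inr ⟨hjm, h⟩)]
    · rcases hsub' a ha with h | h | h
      exacts [Or.inl h, Or.inr (Or.inl h), Or.inr (Or.inr ⟨hjm, h⟩)]
  · obtain ⟨h₁, h₁', hsub⟩ := hrep.mem
    obtain ⟨-, -, hsub'⟩ := hrep.symm.mem
    refine ⟨h₁, h₁', fun a ha => ?_, fun a ha => ?_, fun h => absurd h hjm⟩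
    · rcases hsub a ha with h | h
      exacts [Or.inl h, Or.inr (Or.inl h)]
    · rcases hsub' a ha with h | h
      exacts [Or.inl h, Or.inr (Or.inl h)]

lemma mem_of_evenNbr (hp : p ∈ P (.B n ε) i k) (hik : (i, k) ∈ XB n)
    (hp' : p' ∈ P (.B n ε) i' k') (hik' : (i', k') ∈ XB n) {x c : ℤ} (hx : x % 2 = 0)
    (h : ((x : ℝ), (m : ℝ) - 2) ∈ p) (h' : ((x : ℝ), (m : ℝ) + 2) ∈ p') (hc : EvenNbr n x c)
    (hpp' : ∀ a ∈ p, a.1 = c → a ∈ p') : ((c : ℝ), (m : ℝ)) ∈ p ∧ ((c : ℝ), (m : ℝ)) ∈ p' := by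
  obtain ⟨u, hu, huc, hu₂⟩ := exists_mem_evenNbr hp hik h rfl hx hc
  obtain ⟨u', hu', hu'c, hu'₂⟩ := exists_mem_evenNbr hp' hik' h' rfl hx hc
  obtain rfl := eq_of_fst_eq hp' hik' (hpp' u hu huc) hu' (huc.trans hu'c.symm) hu'c
    (by rcases hc.1 with rfl | rfl <;> omega)
  have hum : u = ((c : ℝ), (m : ℝ)) := Prod.ext huc (by
    rcases hu₂ with h₁ | h₁ <;> rcases hu'₂ with h₂ | h₂ <;> simp only at h₁ h₂ <;> linarith)
  exact ⟨hum ▸ hu, hum ▸ hu'⟩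

lemma mem_of_evenNbr_of_loweredTo (hik : (i, k) ∈ XB n) (hlow : LoweredTo (.B n ε) i k j l p p')
    (hjn : j ≠ n) {x c : ℤ} (hx : (iotaB n (j, l - 2)).1 = x) (hxe : x % 2 = 0)
    (hc : EvenNbr n x c) : ((c : ℝ), (l : ℝ)) ∈ p ∧ ((c : ℝ), (l : ℝ)) ∈ p' := by
  obtain ⟨hxp, hxp', -, hsub', -⟩ := loweredTo_even_spec hlow hjn hx
  obtain ⟨hp, hp', -⟩ := hlow
  refine mem_of_evenNbr hp hik hp' hik hxe hxp hxp' hc fun a ha hac => ?_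
  have hce : c % 2 = 0 := by rcases hc.1 with rfl | rfl <;> omega
  rcases hsub' a ha with ha | rfl | ⟨-, rfl⟩
  · exact ha
  · exact absurd (Int.cast_injective hac.symm) (by rcases hc.1 with rfl | rfl <;> omega)
  · exact absurd hac.symm (fst_ne_of_even hce)

lemma exists_snd_eq_add (hp : p ∈ P (.B n ε) i k) (hik : (i, k) ∈ XB n)
    (hq : q ∈ P (.B n ε) i' k') (hik' : (i', k') ∈ XB n) {a b : ℝ × ℝ} (ha : a ∈ p) (hb : b ∈ q)
    {x : ℤ} (hax : a.1 = x) (hbx : b.1 = x) (hx : x % 2 = 0) : ∃ d : ℤ, b.2 = a.2 + 4 * d := by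
  obtain ⟨m, hm, hmod⟩ := exists_snd_of_even hp hik ha hax hx
  obtain ⟨m', hm', hmod'⟩ := exists_snd_of_even hq hik' hb hbx hx
  refine ⟨(m' - m) / 4, ?_⟩
  rw [hm, hm']
  have : ((4 * ((m' - m) / 4) : ℤ) : ℝ) = m' - m := by
    rw [show 4 * ((m' - m) / 4) = m' - m by omega]; push_cast; ring
  push_cast at this ⊢
  linarith

lemma not_strictlyAbove_lowered_iff_of_eq (hn : 1 ≤ n) (hε : 0 < ε) (hε' : ε < 1 / 2)
    (hik : (i, k) ∈ XB n) (hik' : (i', k') ∈ XB n) (hl : l % 2 = 0)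
    (hlow : LoweredTo (.B n ε) i k n l p p') (hq : q ∈ P (.B n ε) i' k')
    (hpq : StrictlyAbove p q) :
    ¬ StrictlyAbove p' q ↔ (n, l + 1) ∈ Cp (.B n ε) q true ∨ (n, l - 1) ∈ Cp (.B n ε) q false := by
  obtain ⟨hp, -, -, hrep⟩ := hlow
  change (if n = n then _ else _) at hrep
  rw [if_pos rfl] at hrep
  obtain ⟨hpl, hp'l, hsub⟩ := hrep.mem
  have hclash : (2 * (n : ℝ) - 1, (l : ℝ) + 1 + ε) ∉ q := fun h => by
    obtain ⟨u, hu, hu'⟩ := exists_mem_mem_of_spin hn hε hε' hp hik hq hik' hpl h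
    exact hpq.not_mem hu hu'
  simp only [mem_Cp_spin_iff, if_true, Bool.false_eq_true, if_false]
  push_cast
  constructor
  · intro h
    obtain ⟨a, ha, b, hb, hab, hba⟩ := not_strictlyAbove_iff.1 h
    rcases hsub a ha with ha | rfl
    · exact absurd (hpq a ha b hb hab) (not_lt.2 hba)
    have hlo := hpq _ hpl b hb hab
    rcases spin_snd_cases hn hε hε' hq hik' hb hab.symm hl hlo.le hba with h | h | h | h
    · exact absurd hlo (by rw [h]; exact lt_irrefl _)
    · exact Or.inr ⟨by omega, mem_of_fst_snd_eq hb hab.symm h, hpq.not_mem hpl⟩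
    · exact Or.inl ⟨by omega, mem_of_fst_snd_eq hb hab.symm h, hclash⟩
    · exact absurd (mem_of_fst_snd_eq hb hab.symm h) hclash
  · rintro (⟨-, h, -⟩ | ⟨-, h, -⟩) <;>
      exact not_strictlyAbove_iff.2 ⟨_, hp'l, _, h, rfl, by linarith⟩

lemma not_strictlyAbove_raised_iff_of_eq (hn : 1 ≤ n) (hε : 0 < ε) (hε' : ε < 1 / 2)
    (hik : (i, k) ∈ XB n) (hik' : (i', k') ∈ XB n) (hl : l % 2 = 0)
    (hlow : LoweredTo (.B n ε) i k n l p' p) (hq : q ∈ P (.B n ε) i' k')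
    (hqp : StrictlyAbove q p) :
    ¬ StrictlyAbove q p' ↔ (n, l - 1) ∈ Cp (.B n ε) q false ∨ (n, l + 1) ∈ Cp (.B n ε) q true := by
  obtain ⟨-, hp, -, hrep⟩ := hlow
  change (if n = n then _ else _) at hrep
  rw [if_pos rfl] at hrep
  obtain ⟨hpl, hp'l, hsub⟩ := hrep.symm.mem
  have hclash : (2 * (n : ℝ) - 1, (l : ℝ) - 1 - ε) ∉ q := fun h => by
    obtain ⟨u, hu, hu'⟩ := exists_mem_mem_of_spin hn hε hε' hq hik' hp hik h hpl
    exact hqp.not_mem hu hu'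
  simp only [mem_Cp_spin_iff, if_true, Bool.false_eq_true, if_false]
  push_cast
  constructor
  · intro h
    obtain ⟨a, ha, b, hb, hab, hba⟩ := not_strictlyAbove_iff.1 h
    rcases hsub b hb with hb | rfl
    · exact absurd (hqp a ha b hb hab) (not_lt.2 hba)
    have hhi := hqp a ha _ hpl hab
    rcases spin_snd_cases hn hε hε' hq hik' ha hab hl hba hhi.le with h | h | h | h
    · exact absurd (mem_of_fst_snd_eq ha hab h) hclash
    · exact Or.inl ⟨by omega, mem_of_fst_snd_eq ha hab h, hclash⟩
    · exact Or.inr ⟨by omega, mem_of_fst_snd_eq ha hab h, fun h' => hqp.not_mem h' hpl⟩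
    · exact absurd hhi (by rw [h]; exact lt_irrefl _)
  · rintro (⟨-, h, -⟩ | ⟨-, h, -⟩) <;>
      exact not_strictlyAbove_iff.2 ⟨_, h, _, hp'l, rfl, by linarith⟩

lemma mem_Cp_of_lowered (hε : 0 < ε) (hik : (i, k) ∈ XB n) (hik' : (i', k') ∈ XB n)
    (hl : l % 2 = 0) (hj : 1 ≤ j) (hjn : j < n) (hlow : LoweredTo (.B n ε) i k j l p p')
    (hq : q ∈ P (.B n ε) i' k') (hpq : StrictlyAbove p q)
    (hsq : (2 * (n : ℝ) - 1, (l : ℝ) - 1 + ε) ∈ p → (2 * (n : ℝ) - 1, (l : ℝ) + 1 - ε) ∉ q)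
    {b : ℝ × ℝ} (hb : b ∈ q) (hbx : b.1 = (iotaB n (j, l - 2)).1) (hbl : b.2 ≤ l + 2) :
    (j, l + 2) ∈ Cp (.B n ε) q true := by
  obtain ⟨x, hx, hxe, -, -, hmid, hx'⟩ := iotaB_of_lt hj hjn (l - 2)
  rw [show l - 2 + 4 = l + 2 by ring] at hx'
  simp only [hx] at hbx
  obtain ⟨hxp, -, -, -, hspin⟩ := loweredTo_even_spec hlow hjn.ne (x := x) (by rw [hx])
  have hnbr : ∀ c, EvenNbr n x c → ((c : ℝ), (l : ℝ)) ∈ p := fun c hc =>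
    (mem_of_evenNbr_of_loweredTo hik hlow hjn.ne (by rw [hx]) hxe hc).1
  obtain ⟨d, hd⟩ := exists_snd_eq_add hlow.1 hik hq hik' hxp hb rfl hbx hxe
  have hlo := hpq _ hxp b hb hbx.symm
  simp only at hd hlo
  obtain rfl : d = 1 :=
    Int.eq_of_sub_one_lt_of_le (by push_cast; linarith) (by push_cast; linarith)
  refine mem_Cp_of_nbrs hq hik' hj hjn (by omega) ?_ true fun w hw hstep => ?_
  · rw [hx']
    exact mem_of_fst_snd_eq hb hbx (by rw [hd]; push_cast; ring)
  rw [hx'] at hstep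
  simp only [if_true]
  push_cast at hstep ⊢
  rcases hstep with ⟨c, hc, hwc, hw₂ | hw₂⟩ | ⟨hxm, hwx, hw₂ | hw₂⟩
  · linarith
  · exact absurd (mem_of_fst_snd_eq hw hwc (by linarith)) (hpq.not_mem (hnbr c hc))
  · linarith
  · exact absurd (mem_of_fst_snd_eq hw hwx (by linarith)) (hsq (hspin (hmid.1 hxm)).1)

lemma mem_Cp_of_raised (hε : 0 < ε) (hik : (i, k) ∈ XB n) (hik' : (i', k') ∈ XB n)
    (hl : l % 2 = 0) (hj : 1 ≤ j) (hjn : j < n) (hlow : LoweredTo (.B n ε) i k j l p' p)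
    (hq : q ∈ P (.B n ε) i' k') (hqp : StrictlyAbove q p)
    (hsq : (2 * (n : ℝ) - 1, (l : ℝ) + 1 - ε) ∈ p → (2 * (n : ℝ) - 1, (l : ℝ) - 1 + ε) ∉ q)
    {a : ℝ × ℝ} (ha : a ∈ q) (hax : a.1 = (iotaB n (j, l - 2)).1) (hal : l - 2 ≤ a.2) :
    (j, l - 2) ∈ Cp (.B n ε) q false := by
  obtain ⟨x, hx, hxe, -, -, hmid, hx'⟩ := iotaB_of_lt hj hjn (l - 2)
  rw [show l - 2 + 4 = l + 2 by ring] at hx'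
  simp only [hx] at hax
  obtain ⟨-, hxp, -, -, hspin⟩ := loweredTo_even_spec hlow hjn.ne (x := x) (by rw [hx])
  have hnbr : ∀ c, EvenNbr n x c → ((c : ℝ), (l : ℝ)) ∈ p := fun c hc =>
    (mem_of_evenNbr_of_loweredTo hik hlow hjn.ne (by rw [hx]) hxe hc).2
  obtain ⟨d, hd⟩ := exists_snd_eq_add hlow.2.1 hik hq hik' hxp ha rfl hax hxe
  have hhi := hqp a ha _ hxp hax
  simp only at hd hhi
  obtain rfl : d = -1 :=
    Int.eq_of_le_of_lt_add_one (by push_cast; linarith) (by push_cast; linarith)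
  refine mem_Cp_of_nbrs hq hik' hj hjn (by omega) ?_ false fun w hw hstep => ?_
  · rw [hx]
    exact mem_of_fst_snd_eq ha hax (by rw [hd]; push_cast; ring)
  rw [hx] at hstep
  simp only [Bool.false_eq_true, if_false]
  push_cast at hstep ⊢
  rcases hstep with ⟨c, hc, hwc, hw₂ | hw₂⟩ | ⟨hxm, hwx, hw₂ | hw₂⟩
  · exact absurd (hqp w hw _ (hnbr c hc) hwc) (by rw [hw₂]; linarith)
  · linarith
  · exact absurd (mem_of_fst_snd_eq hw hwx (by linarith)) (hsq (hspin (hmid.1 hxm)).2)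
  · linarith

lemma not_strictlyAbove_lowered_iff_of_ne (hn : 1 ≤ n) (hε : 0 < ε) (hε' : ε < 1 / 2)
    (hik : (i, k) ∈ XB n) (hik' : (i', k') ∈ XB n) (hl : l % 2 = 0) (hj : 1 ≤ j) (hjn : j < n)
    (hlow : LoweredTo (.B n ε) i k j l p p') (hq : q ∈ P (.B n ε) i' k')
    (hpq : StrictlyAbove p q)
    (hsq : (2 * (n : ℝ) - 1, (l : ℝ) - 1 + ε) ∈ p → (2 * (n : ℝ) - 1, (l : ℝ) + 1 - ε) ∉ q) :
    ¬ StrictlyAbove p' q ↔ (j, l + 2) ∈ Cp (.B n ε) q true ∨ (j, l - 2) ∈ Cp (.B n ε) q false := by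
  obtain ⟨x, hx, -, -, -, -, hx'⟩ := iotaB_of_lt hj hjn (l - 2)
  rw [show l - 2 + 4 = l + 2 by ring] at hx'
  obtain ⟨hxp, hxp', hsub, -, hspin⟩ := loweredTo_even_spec hlow hjn.ne (x := x) (by rw [hx])
  constructor
  · intro h
    obtain ⟨a, ha, b, hb, hab, hba⟩ := not_strictlyAbove_iff.1 h
    rcases hsub a ha with ha | rfl | ⟨hjm, rfl⟩
    · exact absurd (hpq a ha b hb hab) (not_lt.2 hba)
    · exact Or.inl (mem_Cp_of_lowered hε hik hik' hl hj hjn hlow hq hpq hsq hb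
        (by rw [hx]; exact hab.symm) hba)
    · exfalso
      have hlo := hpq _ (hspin hjm).1 b hb hab
      rcases hba.lt_or_eq with hlt | heq
      · exact spin_not_mem_Ioo hn hε hε' hq hik' hb hab.symm hl hlo hlt
      · exact hsq (hspin hjm).1 (mem_of_fst_snd_eq hb hab.symm heq)
  · rintro (h | h)
    · have hb := mem_of_mem_Cp hjn.ne h
      rw [hx'] at hb
      exact not_strictlyAbove_iff.2 ⟨_, hxp', _, hb, rfl, by push_cast; linarith⟩
    · have hb := mem_of_mem_Cp hjn.ne h
      rw [hx] at hb
      push_cast at hb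
      exact absurd hb (hpq.not_mem hxp)

lemma not_strictlyAbove_raised_iff_of_ne (hn : 1 ≤ n) (hε : 0 < ε) (hε' : ε < 1 / 2)
    (hik : (i, k) ∈ XB n) (hik' : (i', k') ∈ XB n) (hl : l % 2 = 0) (hj : 1 ≤ j) (hjn : j < n)
    (hlow : LoweredTo (.B n ε) i k j l p' p) (hq : q ∈ P (.B n ε) i' k')
    (hqp : StrictlyAbove q p)
    (hsq : (2 * (n : ℝ) - 1, (l : ℝ) + 1 - ε) ∈ p → (2 * (n : ℝ) - 1, (l : ℝ) - 1 + ε) ∉ q) :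
    ¬ StrictlyAbove q p' ↔ (j, l - 2) ∈ Cp (.B n ε) q false ∨ (j, l + 2) ∈ Cp (.B n ε) q true := by
  obtain ⟨x, hx, -, -, -, -, hx'⟩ := iotaB_of_lt hj hjn (l - 2)
  rw [show l - 2 + 4 = l + 2 by ring] at hx'
  obtain ⟨hxp', hxp, -, hsub, hspin⟩ := loweredTo_even_spec hlow hjn.ne (x := x) (by rw [hx])
  constructor
  · intro h
    obtain ⟨a, ha, b, hb, hab, hba⟩ := not_strictlyAbove_iff.1 h
    rcases hsub b hb with hb | rfl | ⟨hjm, rfl⟩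
    · exact absurd (hqp a ha b hb hab) (not_lt.2 hba)
    · exact Or.inl (mem_Cp_of_raised hε hik hik' hl hj hjn hlow hq hqp hsq ha
        (by rw [hx]; exact hab) hba)
    · exfalso
      have hhi := hqp a ha _ (hspin hjm).2 hab
      rcases hba.lt_or_eq with hlt | heq
      · exact spin_not_mem_Ioo hn hε hε' hq hik' ha hab hl hlt hhi
      · exact hsq (hspin hjm).2 (mem_of_fst_snd_eq ha hab heq.symm)
  · rintro (h | h)
    · have hb := mem_of_mem_Cp hjn.ne h
      rw [hx] at hb
      push_cast at hb
      exact not_strictlyAbove_iff.2 ⟨_, hb, _, hxp', rfl, le_rfl⟩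
    · have hb := mem_of_mem_Cp hjn.ne h
      rw [hx'] at hb
      push_cast at hb
      exact absurd hxp (hqp.not_mem hb)

lemma not_strictlyAbove_lowered_iff (hS : (Setting.B n ε).valid) (hik : (i, k) ∈ XB n)
    (hik' : (i', k') ∈ XB n) (hjl : (j, l) ∈ W (.B n ε)) (hlow : LoweredTo (.B n ε) i k j l p p')
    (hq : q ∈ P (.B n ε) i' k') (hpq : StrictlyAbove p q)
    (hsq : (2 * (n : ℝ) - 1, (l : ℝ) - 1 + ε) ∈ p → (2 * (n : ℝ) - 1, (l : ℝ) + 1 - ε) ∉ q) :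
    ¬ StrictlyAbove p' q ↔
      (j, l + (rr (.B n ε) j : ℤ)) ∈ Cp (.B n ε) q true ∨
        (j, l - (rr (.B n ε) j : ℤ)) ∈ Cp (.B n ε) q false := by
  obtain ⟨hn, hε, hε'⟩ := hS
  obtain ⟨hl, rfl | ⟨hj, hjn⟩⟩ := mem_W hjl
  · simp only [rr, if_true, Nat.cast_one]
    exact not_strictlyAbove_lowered_iff_of_eq (by omega) hε hε' hik hik' hl hlow hq hpq
  · simp only [rr, if_neg hjn.ne, Nat.cast_ofNat]
    exact not_strictlyAbove_lowered_iff_of_ne (by omega) hε hε' hik hik' hl hj hjn hlow hq hpq hsq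

lemma not_strictlyAbove_raised_iff (hS : (Setting.B n ε).valid) (hik : (i, k) ∈ XB n)
    (hik' : (i', k') ∈ XB n) (hjl : (j, l) ∈ W (.B n ε)) (hlow : LoweredTo (.B n ε) i k j l p' p)
    (hq : q ∈ P (.B n ε) i' k') (hqp : StrictlyAbove q p)
    (hsq : (2 * (n : ℝ) - 1, (l : ℝ) + 1 - ε) ∈ p → (2 * (n : ℝ) - 1, (l : ℝ) - 1 + ε) ∉ q) :
    ¬ StrictlyAbove q p' ↔
      (j, l - (rr (.B n ε) j : ℤ)) ∈ Cp (.B n ε) q false ∨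
        (j, l + (rr (.B n ε) j : ℤ)) ∈ Cp (.B n ε) q true := by
  obtain ⟨hn, hε, hε'⟩ := hS
  obtain ⟨hl, rfl | ⟨hj, hjn⟩⟩ := mem_W hjl
  · simp only [rr, if_true, Nat.cast_one]
    exact not_strictlyAbove_raised_iff_of_eq (by omega) hε hε' hik hik' hl hlow hq hqp
  · simp only [rr, if_neg hjn.ne, Nat.cast_ofNat]
    exact not_strictlyAbove_raised_iff_of_ne (by omega) hε hε' hik hik' hl hj hjn hlow hq hqp hsq

end TypeB

theorem stmt7_general (S : Setting) (hS : S.valid) {T : ℕ}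
    (w : Fin T → ℕ × ℤ) (hw : IsSnake S w)
    (ps : Fin T → List (ℝ × ℝ)) (hps : ps ∈ PBar S w)
    (t : Fin T) (j : ℕ) (l : ℤ) (hjl : (j, l) ∈ W S) :
    (∀ p' : List (ℝ × ℝ), LoweredTo S (w t).1 (w t).2 j l (ps t) p' →
      (¬ NonOverlapping (Function.update ps t p') ↔
        ∃ s : Fin T, t < s ∧
          ((j, l + (rr S j : ℤ)) ∈ Cp S (ps s) true ∨
           (j, l - (rr S j : ℤ)) ∈ Cp S (ps s) false))) ∧
    (∀ p' : List (ℝ × ℝ), LoweredTo S (w t).1 (w t).2 j l p' (ps t) →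
      (¬ NonOverlapping (Function.update ps t p') ↔
        ∃ s : Fin T, s < t ∧
          ((j, l - (rr S j : ℤ)) ∈ Cp S (ps s) false ∨
           (j, l + (rr S j : ℤ)) ∈ Cp S (ps s) true))) := by
  obtain ⟨hmem, hno⟩ := hps
  refine ⟨fun p' hlow => not_nonOverlapping_update_iff_of_liesBelow hno
      (hlow.liesBelow_and_liesAbove hS).1 fun s hts => ?_,
    fun p' hlow => not_nonOverlapping_update_iff_of_liesAbove hno
      (hlow.liesBelow_and_liesAbove hS).2 fun s hst => ?_⟩
  · cases S with
    | A n => exact TypeA.not_strictlyAbove_lowered_iff (hw.1 t) (hw.1 s) hlow (hmem s) (hno t s hts)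
    | B n ε =>
      exact TypeB.not_strictlyAbove_lowered_iff hS (hw.1 t) (hw.1 s) hjl hlow (hmem s) (hno t s hts)
        (TypeB.not_mem_of_isSnake hS hw hmem hno hts (TypeB.mem_W hjl).1)
  · cases S with
    | A n => exact TypeA.not_strictlyAbove_raised_iff (hw.1 t) (hw.1 s) hlow (hmem s) (hno s t hst)
    | B n ε =>
      exact TypeB.not_strictlyAbove_raised_iff hS (hw.1 t) (hw.1 s) hjl hlow (hmem s) (hno s t hst)
        fun ht hs => TypeB.not_mem_of_isSnake hS hw hmem hno hst (TypeB.mem_W hjl).1 hs ht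

/-- suppose `p_t` can be lowered (resp. raised) at `(j,ℓ) ∈ W`; the tuple
obtained by replacing `p_t` with its lowered (resp. raised) version fails to be
non-overlapping iff some later (resp. earlier) path `p_s` has an upper corner at
`(j, ℓ+r_j)` or a lower corner at `(j, ℓ-r_j)`. -/
theorem stmt7 (S : Setting) (hS : S.valid) {T : ℕ} (hT : 1 ≤ T)
    (w : Fin T → ℕ × ℤ) (hw : IsSnake S w)
    (ps : Fin T → List (ℝ × ℝ)) (hps : ps ∈ PBar S w)
    (t : Fin T) (j : ℕ) (l : ℤ) (hjl : (j, l) ∈ W S) :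
    (∀ p' : List (ℝ × ℝ), LoweredTo S (w t).1 (w t).2 j l (ps t) p' →
      (¬ NonOverlapping (Function.update ps t p') ↔
        ∃ s : Fin T, t < s ∧
          ((j, l + (rr S j : ℤ)) ∈ Cp S (ps s) true ∨
           (j, l - (rr S j : ℤ)) ∈ Cp S (ps s) false))) ∧
    (∀ p' : List (ℝ × ℝ), LoweredTo S (w t).1 (w t).2 j l p' (ps t) →
      (¬ NonOverlapping (Function.update ps t p') ↔
        ∃ s : Fin T, s < t ∧
          ((j, l - (rr S j : ℤ)) ∈ Cp S (ps s) false ∨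
           (j, l + (rr S j : ℤ)) ∈ Cp S (ps s) true))) :=
  stmt7_general S hS w hw ps hps t j l hjl

end Paper
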